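/- arXiv:math/0209229 — 7 statements merged into one kernel-verified Lean document; each statement's English description precedes it below -/
import Mathlib

section
/- Let H = {λ ∈ ℂ : 1/3 ≤ |λ|² ≤ 1/2 and 0 ≤ Re(λ) ≤ (3|λ|² − 1)/2}. Then ℳ ∩ int(H) ⊆ clos(int(ℳ)): every point of ℳ lying in the interior of H belongs to the closure of the interior of ℳ. -/
open MeasureTheory Set Pointwise ENNReal

noncomputable section

/-- The attractor `A_λ` of the IFS `{λz-1, λz+1}`:
the set of sums `∑ aₙ λⁿ` with `aₙ ∈ {-1,1}`. -/
def Attr (lam : ℂ) : Set ℂ :=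
  {z | ∃ a : ℕ → ℤ, (∀ n, a n = -1 ∨ a n = 1) ∧
    HasSum (fun n : ℕ => (a n : ℂ) * lam ^ n) z}

/-- The attractor `A_λ{-1,0,1}` of the IFS `{λz-1, λz, λz+1}`:
the set of sums `∑ aₙ λⁿ` with `aₙ ∈ {-1,0,1}`. -/
def Attr3 (lam : ℂ) : Set ℂ :=
  {z | ∃ a : ℕ → ℤ, (∀ n, a n = -1 ∨ a n = 0 ∨ a n = 1) ∧
    HasSum (fun n : ℕ => (a n : ℂ) * lam ^ n) z}

/-- The "Mandelbrot set" ℳ: those `λ` in the open unit disk for which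
`1 + ∑_{k≥1} a_k λ^k = 0` for some coefficients `a_k ∈ {-1,0,1}`. -/
def MSet : Set ℂ :=
  {lam | ‖lam‖ < 1 ∧ ∃ a : ℕ → ℤ, (∀ k, a k = -1 ∨ a k = 0 ∨ a k = 1) ∧
    HasSum (fun k : ℕ => (a k : ℂ) * lam ^ (k + 1)) (-1)}

/-- ℳ₀: zeros in the open unit disk of polynomials with coefficients in
`{0,±1}` and constant term `1`. -/
def MSet0 : Set ℂ :=
  {lam | ‖lam‖ < 1 ∧ ∃ n : ℕ, 1 ≤ n ∧ ∃ a : ℕ → ℤ,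
    (∀ k, a k = -1 ∨ a k = 0 ∨ a k = 1) ∧
    1 + ∑ k ∈ Finset.range n, (a k : ℂ) * lam ^ (k + 1) = 0}

/-- The sign `±1` given by the `n`-th binary digit of `x ∈ [0,1)`. -/
def signFun (n : ℕ) (x : ℝ) : ℤ := 2 * (⌊x * 2 ^ (n + 1)⌋ % 2) - 1

/-- The complex Bernoulli convolution `ν_λ`: the distribution of the random
series `∑ ±λⁿ` with i.i.d. fair signs, realized as the pushforward of
Lebesgue measure on `[0,1)` (whose binary digits are i.i.d. fair coin flips)
under `x ↦ ∑ₙ signFun n x • λⁿ`. -/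
def nu (lam : ℂ) : Measure ℂ :=
  Measure.map (fun x : ℝ => ∑' n : ℕ, (signFun n x : ℂ) * lam ^ n)
    (volume.restrict (Set.Ico (0 : ℝ) 1))

/-- The similarity dimension `s(λ) = log 2 / (−log |λ|)`. -/
def sdim (lam : ℂ) : ℝ := Real.log 2 / (- Real.log (‖lam‖))

/-- The set `H = {λ : 1/3 ≤ |λ|² ≤ 1/2, 0 ≤ Re λ ≤ (3|λ|²−1)/2}`. -/
def Hset : Set ℂ :=
  {lam | 1/3 ≤ (‖lam‖) ^ 2 ∧ (‖lam‖) ^ 2 ≤ 1/2 ∧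
    0 ≤ lam.re ∧ lam.re ≤ (3 * (‖lam‖) ^ 2 - 1) / 2}

namespace SSaux
open Metric Filter

def digit (x y : ℝ) (w : ℂ) : ℤ :=
  if y/2 < w.re * y - w.im * x then 1 else if w.re * y - w.im * x < -(y/2) then -1 else 0

lemma digit_mem (x y : ℝ) (w : ℂ) : digit x y w = -1 ∨ digit x y w = 0 ∨ digit x y w = 1 := by
  unfold digit; split_ifs <;> tauto

lemma key (x y ρ₁ ρ₂ u v : ℝ) (a : ℤ) (hx : 0 ≤ x) (hy : 0 < y)
    (h1 : y ≤ 2*(x^2+y^2)*ρ₂) (h2 : ρ₁*y + ρ₂*x ≤ y + (x^2+y^2)*ρ₂)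
    (h3 : ρ₂*(1+x) ≤ ρ₁*y) (hu : |u| ≤ ρ₁) (hv : |v| ≤ ρ₂)
    (ha : (a : ℝ) = if y/2 < u*y - v*x then 1 else if u*y - v*x < -(y/2) then -1 else 0) :
    |(u - a)*x + v*y| ≤ (x^2+y^2)*ρ₁ ∧ |v*x - (u - a)*y| ≤ (x^2+y^2)*ρ₂ := by
  set s := x^2+y^2 with hs
  have hs0 : 0 < s := by positivity
  rw [abs_le] at hu hv
  have hρ₂ : 0 < ρ₂ := by nlinarith
  have hρ₁ : 0 < ρ₁ := by nlinarith
  have hE : |u*y - v*x - a*y| ≤ s*ρ₂ := by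
    rw [abs_le]
    split_ifs at ha with hc1 hc2
    · rw [ha]; constructor <;> nlinarith
    · rw [ha]; constructor <;> nlinarith
    · rw [ha]; push_neg at hc1 hc2; constructor <;> nlinarith
  rw [abs_le] at hE
  constructor <;> rw [abs_le] <;> constructor <;> nlinarith [hE.1, hE.2, mul_pos hs0 hρ₂]

/-- Hypotheses on `lam, ρ₁, ρ₂` making the rectangle self-covering work. -/
structure Good (lam : ℂ) (ρ₁ ρ₂ : ℝ) : Prop where
  hx : 0 ≤ lam.re
  hy : 0 < lam.im
  h1 : lam.im ≤ 2*(lam.re^2+lam.im^2)*ρ₂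
  h2 : ρ₁*lam.im + ρ₂*lam.re ≤ lam.im + (lam.re^2+lam.im^2)*ρ₂
  h3 : ρ₂*(1+lam.re) ≤ ρ₁*lam.im

lemma Good.step {lam : ℂ} {ρ₁ ρ₂ : ℝ} (G : Good lam ρ₁ ρ₂) {w : ℂ}
    (hw1 : |w.re| ≤ ρ₁) (hw2 : |w.im| ≤ ρ₂) :
    |((w - (digit lam.re lam.im w : ℤ)) / lam).re| ≤ ρ₁ ∧
      |((w - (digit lam.re lam.im w : ℤ)) / lam).im| ≤ ρ₂ := by
  obtain ⟨hx, hy, h1, h2, h3⟩ := G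
  set x := lam.re; set y := lam.im
  set a : ℤ := digit x y w with hadef
  have ha : (a : ℝ) = if y/2 < w.re*y - w.im*x then 1 else if w.re*y - w.im*x < -(y/2) then -1 else 0 := by
    rw [hadef]; unfold digit; split_ifs <;> simp
  have hk := key x y ρ₁ ρ₂ w.re w.im a hx hy h1 h2 h3 hw1 hw2 ha
  have hs0 : (0:ℝ) < x^2+y^2 := by positivity
  have hnormSq : Complex.normSq lam = x^2+y^2 := by
    simp [Complex.normSq_apply]; ring
  have hre : ((w - (a:ℂ)) / lam).re = ((w.re - a)*x + w.im*y) / (x^2+y^2) := by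
    rw [Complex.div_re, hnormSq]
    simp [Complex.sub_re, Complex.sub_im, Complex.intCast_re, Complex.intCast_im]
    ring
  have him : ((w - (a:ℂ)) / lam).im = (w.im*x - (w.re - a)*y) / (x^2+y^2) := by
    rw [Complex.div_im, hnormSq]
    simp [Complex.sub_re, Complex.sub_im, Complex.intCast_re, Complex.intCast_im]
    ring
  constructor
  · rw [hre, abs_div, abs_of_pos hs0, div_le_iff₀ hs0]
    calc |(w.re - a)*x + w.im*y| ≤ (x^2+y^2)*ρ₁ := hk.1
    _ = ρ₁ * (x^2+y^2) := by ring
  · rw [him, abs_div, abs_of_pos hs0, div_le_iff₀ hs0]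
    calc |w.im*x - (w.re - a)*y| ≤ (x^2+y^2)*ρ₂ := hk.2
    _ = ρ₂ * (x^2+y^2) := by ring

def seq (lam z : ℂ) : ℕ → ℂ
  | 0 => z
  | n+1 => (seq lam z n - (digit lam.re lam.im (seq lam z n) : ℤ)) / lam

/-- Main covering consequence: rectangle points have `{-1,0,1}` power series expansions. -/
lemma good_hasSum {lam : ℂ} {ρ₁ ρ₂ : ℝ} (G : Good lam ρ₁ ρ₂) (hlt : ‖lam‖ < 1)
    {z : ℂ} (hz1 : |z.re| ≤ ρ₁) (hz2 : |z.im| ≤ ρ₂) :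
    ∃ d : ℕ → ℤ, (∀ j, d j = -1 ∨ d j = 0 ∨ d j = 1) ∧
      HasSum (fun j : ℕ => (d j : ℂ) * lam ^ j) z := by
  have hlam0 : lam ≠ 0 := by
    intro h; rw [h] at G; exact lt_irrefl 0 (by simpa using G.hy)
  set d : ℕ → ℤ := fun n => digit lam.re lam.im (seq lam z n) with hd
  refine ⟨d, fun j => digit_mem _ _ _, ?_⟩
  have hinv : ∀ n, |(seq lam z n).re| ≤ ρ₁ ∧ |(seq lam z n).im| ≤ ρ₂ := by
    intro n; induction n with
    | zero => exact ⟨hz1, hz2⟩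
    | succ n ih => exact G.step ih.1 ih.2
  have hrec : ∀ n, seq lam z n = lam * seq lam z (n+1) + (d n : ℂ) := by
    intro n
    show seq lam z n = lam * ((seq lam z n - (digit lam.re lam.im (seq lam z n) : ℤ)) / lam) + _
    field_simp
    simp [hd]
  have hpart : ∀ n, z = (∑ j ∈ Finset.range n, (d j : ℂ) * lam ^ j) + lam ^ n * seq lam z n := by
    intro n; induction n with
    | zero => simp [seq]
    | succ n ih =>
      rw [Finset.sum_range_succ]
      calc z = (∑ j ∈ Finset.range n, (d j : ℂ) * lam ^ j) + lam ^ n * seq lam z n := ih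
      _ = _ := by rw [hrec n]; ring
  have hsummable : Summable (fun j : ℕ => (d j : ℂ) * lam ^ j) := by
    apply Summable.of_norm
    apply Summable.of_nonneg_of_le (fun j => norm_nonneg _)
      (fun j => ?_) (summable_geometric_of_lt_one (norm_nonneg lam) hlt)
    rw [norm_mul, norm_pow]
    have : ‖((d j : ℂ))‖ ≤ 1 := by
      rcases digit_mem lam.re lam.im (seq lam z j) with h | h | h <;>
        simp [hd, h]
    calc ‖((d j : ℂ))‖ * ‖lam‖ ^ j ≤ 1 * ‖lam‖ ^ j := by
          apply mul_le_mul_of_nonneg_right this (by positivity)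
    _ = ‖lam‖ ^ j := by simp
  rw [hsummable.hasSum_iff_tendsto_nat]
  have hb : ∀ n, ‖z - ∑ j ∈ Finset.range n, (d j : ℂ) * lam ^ j‖ ≤ ‖lam‖ ^ n * (ρ₁ + ρ₂) := by
    intro n
    have hz' : z - ∑ j ∈ Finset.range n, (d j : ℂ) * lam ^ j = lam ^ n * seq lam z n := by
      nth_rewrite 1 [hpart n]; ring
    rw [hz', norm_mul, norm_pow]
    apply mul_le_mul_of_nonneg_left _ (by positivity)
    calc ‖seq lam z n‖ ≤ |(seq lam z n).re| + |(seq lam z n).im| :=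
        Complex.norm_le_abs_re_add_abs_im _
    _ ≤ ρ₁ + ρ₂ := add_le_add (hinv n).1 (hinv n).2
  have htend : Filter.Tendsto (fun n => ‖lam‖ ^ n * (ρ₁ + ρ₂)) Filter.atTop (nhds 0) := by
    simpa using (tendsto_pow_atTop_nhds_zero_of_lt_one (norm_nonneg lam) hlt).mul_const (ρ₁ + ρ₂)
  have : Filter.Tendsto (fun n => z - ∑ j ∈ Finset.range n, (d j : ℂ) * lam ^ j) Filter.atTop (nhds 0) := by
    apply squeeze_zero_norm hb htend
  have := this.const_sub z
  simpa using this


/-- The open region (for fixed `ρ₁ ρ₂`) on which the covering argument works. -/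
def W (ρ₁ ρ₂ : ℝ) : Set ℂ := {lam | 0 < lam.re ∧ lam.im ≠ 0 ∧ ‖lam‖ < 1 ∧
  |lam.im| < 2*(lam.re^2+lam.im^2)*ρ₂ ∧
  ρ₁*|lam.im| + ρ₂*lam.re < |lam.im| + (lam.re^2+lam.im^2)*ρ₂ ∧
  ρ₂*(1+lam.re) < ρ₁*|lam.im|}

lemma isOpen_W (ρ₁ ρ₂ : ℝ) : IsOpen (W ρ₁ ρ₂) := by
  have hre : Continuous fun lam : ℂ => lam.re := Complex.continuous_re
  have him : Continuous fun lam : ℂ => |lam.im| := Complex.continuous_im.abs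
  have habs : Continuous fun lam : ℂ => ‖lam‖ := continuous_norm
  have hsq : Continuous fun lam : ℂ => lam.re^2 + lam.im^2 :=
    (Complex.continuous_re.pow 2).add (Complex.continuous_im.pow 2)
  have hW : W ρ₁ ρ₂ = {l : ℂ | 0 < l.re} ∩ ({l : ℂ | l.im ≠ 0} ∩ ({l : ℂ | ‖l‖ < 1} ∩
      ({l : ℂ | |l.im| < 2*(l.re^2+l.im^2)*ρ₂} ∩ ({l : ℂ | ρ₁*|l.im| + ρ₂*l.re < |l.im| + (l.re^2+l.im^2)*ρ₂} ∩
      {l : ℂ | ρ₂*(1+l.re) < ρ₁*|l.im|})))) := rfl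
  rw [hW]
  apply IsOpen.inter (isOpen_lt continuous_const hre)
  apply IsOpen.inter (isOpen_ne_fun Complex.continuous_im continuous_const)
  apply IsOpen.inter (isOpen_lt habs continuous_const)
  apply IsOpen.inter (isOpen_lt him (by fun_prop))
  apply IsOpen.inter (isOpen_lt (by fun_prop) (by fun_prop))
  exact isOpen_lt (by fun_prop) (by fun_prop)

lemma W_pos {lam : ℂ} {ρ₁ ρ₂ : ℝ} (h : lam ∈ W ρ₁ ρ₂) : 0 < ρ₂ ∧ ρ₂ ≤ ρ₁ := by
  obtain ⟨hx, hy, habs, h1, h2, h3⟩ := h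
  have hy' : 0 < |lam.im| := abs_pos.mpr hy
  have hs : 0 < lam.re^2 + lam.im^2 := by positivity
  have hρ₂ : 0 < ρ₂ := by nlinarith
  have him1 : |lam.im| ≤ 1 := le_of_lt (lt_of_le_of_lt (Complex.abs_im_le_norm lam) habs)
  constructor
  · exact hρ₂
  · nlinarith

/-- Points of `W` admit power series representations for rectangle points. -/
lemma W_hasSum {lam : ℂ} {ρ₁ ρ₂ : ℝ} (h : lam ∈ W ρ₁ ρ₂)
    {z : ℂ} (hz : ‖z‖ ≤ ρ₂) :
    ∃ d : ℕ → ℤ, (∀ j, d j = -1 ∨ d j = 0 ∨ d j = 1) ∧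
      HasSum (fun j : ℕ => (d j : ℂ) * lam ^ j) z := by
  obtain ⟨hρ₂, hρ₂₁⟩ := W_pos h
  obtain ⟨hx, hy, habs, h1, h2, h3⟩ := h
  have hz1 : |z.re| ≤ ρ₁ := le_trans (le_trans (Complex.abs_re_le_norm z) hz) hρ₂₁
  have hz2 : |z.im| ≤ ρ₂ := le_trans (Complex.abs_im_le_norm z) hz
  rcases lt_or_gt_of_ne hy with hneg | hpos
  · -- lam.im < 0 : use the conjugate
    set mu := (starRingEnd ℂ) lam with hmu
    have hmure : mu.re = lam.re := rfl
    have hmuim : mu.im = -lam.im := rfl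
    have habs' : |lam.im| = -lam.im := abs_of_neg hneg
    have G : Good mu ρ₁ ρ₂ := by
      refine ⟨by rw [hmure]; exact le_of_lt hx, by rw [hmuim]; linarith, ?_, ?_, ?_⟩ <;>
        rw [hmure, hmuim] <;> nlinarith [h1, h2, h3]
    have hmuabs : ‖mu‖ < 1 := by rwa [hmu, Complex.norm_conj]
    have hzc1 : |((starRingEnd ℂ) z).re| ≤ ρ₁ := by rwa [Complex.conj_re]
    have hzc2 : |((starRingEnd ℂ) z).im| ≤ ρ₂ := by rw [Complex.conj_im, abs_neg]; exact hz2
    obtain ⟨d, hd, hsum⟩ := good_hasSum G hmuabs hzc1 hzc2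
    refine ⟨d, hd, ?_⟩
    have : HasSum (fun j : ℕ => (starRingEnd ℂ) ((d j : ℂ) * mu ^ j)) ((starRingEnd ℂ) ((starRingEnd ℂ) z)) :=
      Complex.hasSum_conj.mpr (by simpa using hsum)
    simpa [hmu, map_mul, map_pow, Complex.conj_conj] using this
  · exact good_hasSum ⟨le_of_lt hx, hpos, by nlinarith [abs_of_pos hpos, h1],
      by nlinarith [abs_of_pos hpos, h2], by nlinarith [abs_of_pos hpos, h3]⟩ habs hz1 hz2

/-- Existence of good `ρ₁, ρ₂` under the strict H conditions. -/
lemma exists_W {lam : ℂ} (hx : 0 < lam.re) (hy : lam.im ≠ 0)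
    (hH : lam.re < (3*(lam.re^2+lam.im^2)-1)/2) (habs : ‖lam‖ < 1) :
    ∃ ρ₁ ρ₂ : ℝ, lam ∈ W ρ₁ ρ₂ := by
  set x := lam.re
  set y := |lam.im| with hydef
  have hy' : 0 < y := abs_pos.mpr hy
  set s := lam.re^2 + lam.im^2 with hsdef
  have hs1 : s < 1 := by
    have := Complex.sq_norm lam
    rw [Complex.normSq_apply] at this
    nlinarith [norm_nonneg lam]
  have hs0 : 0 < s := by positivity
  have hkey : 1 + 2*x - s < 2*s := by nlinarith
  have hd2 : 0 < 1 + 2*x - s := by nlinarith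
  set ρ₂ := (y/(2*s) + y/(1+2*x-s))/2 with hρ₂def
  have hlow : y/(2*s) < ρ₂ := by
    rw [hρ₂def]
    have : y/(2*s) < y/(1+2*x-s) := by
      apply div_lt_div_of_pos_left hy' hd2 hkey
    linarith
  have hhigh : ρ₂ < y/(1+2*x-s) := by
    rw [hρ₂def]
    have : y/(2*s) < y/(1+2*x-s) := div_lt_div_of_pos_left hy' hd2 hkey
    linarith
  have hρ₂pos : 0 < ρ₂ := lt_trans (by positivity) hlow
  have h1 : y < 2*s*ρ₂ := by
    rw [div_lt_iff₀ (by positivity)] at hlow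
    linarith [hlow]
  have hup : ρ₂*(1+2*x-s) < y := by
    rw [lt_div_iff₀ hd2] at hhigh
    linarith
  set ρ₁ := (ρ₂*(1+x)/y + (y + s*ρ₂ - ρ₂*x)/y)/2 with hρ₁def
  have hmid : ρ₂*(1+x)/y < (y + s*ρ₂ - ρ₂*x)/y := by
    apply div_lt_div_of_pos_right ?_ hy'
    nlinarith
  have h3 : ρ₂*(1+x) < ρ₁*y := by
    have : ρ₂*(1+x)/y < ρ₁ := by rw [hρ₁def]; linarith
    rw [div_lt_iff₀ hy'] at this
    linarith
  have h2 : ρ₁*y + ρ₂*x < y + s*ρ₂ := by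
    have : ρ₁ < (y + s*ρ₂ - ρ₂*x)/y := by rw [hρ₁def]; linarith
    rw [lt_div_iff₀ hy'] at this
    linarith
  exact ⟨ρ₁, ρ₂, hx, hy, habs, h1, h2, h3⟩

/-- Strictness of the H conditions on the interior. -/
lemma interior_Hset_strict {lam : ℂ}
    (h : lam ∈ interior {lam : ℂ | 1/3 ≤ (‖lam‖) ^ 2 ∧ (‖lam‖) ^ 2 ≤ 1/2 ∧
      0 ≤ lam.re ∧ lam.re ≤ (3 * (‖lam‖) ^ 2 - 1) / 2}) :
    0 < lam.re ∧ lam.im ≠ 0 ∧ lam.re < (3*(lam.re^2+lam.im^2)-1)/2 := by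
  rw [mem_interior_iff_mem_nhds, Metric.mem_nhds_iff] at h
  obtain ⟨ε, hε, hball⟩ := h
  have hself := hball (Metric.mem_ball_self hε)
  obtain ⟨ha1, ha2, ha3, ha4⟩ := hself
  have hsq : (‖lam‖)^2 = lam.re^2 + lam.im^2 := by
    rw [Complex.sq_norm, Complex.normSq_apply]; ring
  rw [hsq] at ha1 ha2 ha4
  have hx14 : lam.re ≤ 1/4 := by nlinarith
  -- (a)  0 < re
  have h0 : 0 < lam.re := by
    set μ : ℂ := lam - (↑(ε/2) : ℂ) with hμ
    have hμball : μ ∈ Metric.ball lam ε := by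
      rw [Metric.mem_ball, dist_eq_norm]
      simp [hμ]
      rw [abs_of_pos (by linarith)]
      linarith
    have := (hball hμball).2.2.1
    have hμre : μ.re = lam.re - ε/2 := by simp [hμ]
    rw [hμre] at this
    linarith
  -- (b) re < (3s-1)/2
  have hb : lam.re < (3*(lam.re^2+lam.im^2)-1)/2 := by
    set t := min (ε/2) (1/12 : ℝ) with ht
    have ht0 : 0 < t := lt_min (by linarith) (by norm_num)
    have ht12 : t ≤ 1/12 := min_le_right _ _
    set μ : ℂ := lam + (↑t : ℂ) with hμ
    have hμball : μ ∈ Metric.ball lam ε := by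
      rw [Metric.mem_ball, dist_eq_norm]
      simp [hμ]
      rw [abs_of_pos ht0]
      calc t ≤ ε/2 := min_le_left _ _
      _ < ε := by linarith
    have h4 := (hball hμball).2.2.2
    have hμre : μ.re = lam.re + t := by simp [hμ]
    have hμim : μ.im = lam.im := by simp [hμ]
    have hμsq : (‖μ‖)^2 = μ.re^2 + μ.im^2 := by
      rw [Complex.sq_norm, Complex.normSq_apply]; ring
    rw [hμsq, hμre, hμim] at h4
    nlinarith
  -- (c) im ≠ 0
  refine ⟨h0, ?_, hb⟩
  intro h'
  rw [h'] at ha1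
  nlinarith [ha1, hx14]


variable (a : ℕ → ℤ)

def P (N : ℕ) (z : ℂ) : ℂ := 1 + ∑ k ∈ Finset.range N, (a k : ℂ) * z^(k+1)

def g (z : ℂ) : ℂ := 1 + ∑' k : ℕ, (a k : ℂ) * z^(k+1)

variable {a} (ha : ∀ k, a k = -1 ∨ a k = 0 ∨ a k = 1)
include ha

lemma coeff_norm (k : ℕ) : ‖((a k : ℤ) : ℂ)‖ ≤ 1 := by
  rcases ha k with h | h | h <;> simp [h]

lemma term_summable {z : ℂ} (hz : ‖z‖ < 1) :
    Summable (fun k : ℕ => (a k : ℂ) * z^(k+1)) := by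
  apply Summable.of_norm
  apply Summable.of_nonneg_of_le (fun k => norm_nonneg _) (fun k => ?_)
    ((summable_geometric_of_lt_one (norm_nonneg z) hz).mul_right ‖z‖)
  rw [norm_mul, norm_pow, pow_succ]
  calc ‖((a k : ℤ) : ℂ)‖ * (‖z‖^k * ‖z‖) ≤ 1 * (‖z‖^k * ‖z‖) := by
        apply mul_le_mul_of_nonneg_right (coeff_norm ha k); positivity
  _ = ‖z‖^k * ‖z‖ := one_mul _

lemma tail_bound {r : ℝ} (hr1 : r < 1) (N : ℕ) {z : ℂ} (hz : ‖z‖ ≤ r) :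
    ‖g a z - P a N z‖ ≤ r^(N+1) * (1-r)⁻¹ := by
  have hr0 : 0 ≤ r := le_trans (norm_nonneg z) hz
  have hz1 : ‖z‖ < 1 := lt_of_le_of_lt hz hr1
  have hsum := term_summable ha hz1
  have hdiff : g a z - P a N z = ∑' k : ℕ, (a (k+N) : ℂ) * z^((k+N)+1) := by
    have := Summable.sum_add_tsum_nat_add (f := fun k : ℕ => (a k : ℂ) * z^(k+1)) N hsum
    unfold g P
    linear_combination -this
  rw [hdiff]
  apply tsum_of_norm_bounded ((hasSum_geometric_of_lt_one hr0 hr1).mul_left (r^(N+1)))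
  intro k
  rw [norm_mul, norm_pow]
  calc ‖((a (k+N) : ℤ) : ℂ)‖ * ‖z‖^(k+N+1) ≤ 1 * r^(k+N+1) :=
        mul_le_mul (coeff_norm ha _) (pow_le_pow_left₀ (norm_nonneg z) hz _) (by positivity) zero_le_one
  _ = r^(N+1) * r^k := by rw [one_mul, ← pow_add]; congr 1; omega

omit ha in
lemma P_differentiable (N : ℕ) : Differentiable ℂ (P a N) := by
  apply Differentiable.const_add
  apply Differentiable.fun_sum
  intro k _
  exact (differentiable_pow (k+1)).const_mul _

omit ha in
lemma g_zero : g a 0 = 1 := by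
  unfold g
  have : (fun k : ℕ => (a k : ℂ) * (0:ℂ)^(k+1)) = fun _ => 0 := by
    funext k; simp
  rw [this, tsum_zero, add_zero]

lemma g_differentiableAt {z : ℂ} (hz : ‖z‖ < 1) : DifferentiableAt ℂ (g a) z := by
  set r : ℝ := (‖z‖ + 1)/2 with hr
  have hzr : ‖z‖ < r := by rw [hr]; linarith
  have hr1 : r < 1 := by rw [hr]; linarith
  have hr0 : 0 ≤ r := le_trans (norm_nonneg z) (le_of_lt hzr)
  have hdiff : DifferentiableOn ℂ (fun w => ∑' k : ℕ, (a k : ℂ) * w^(k+1)) (ball 0 r) := by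
    have h1 : TendstoUniformlyOn (fun (t : Finset ℕ) (w : ℂ) => ∑ k ∈ t, (a k : ℂ) * w^(k+1))
        (fun w => ∑' k : ℕ, (a k : ℂ) * w^(k+1)) atTop (closedBall 0 r) := by
      apply tendstoUniformlyOn_tsum (u := fun k : ℕ => r^(k+1))
      · exact (summable_geometric_of_lt_one hr0 hr1).mul_right r |>.congr
          (fun k => by rw [pow_succ])
      · intro k x hx
        rw [norm_mul, norm_pow]
        have hxr : ‖x‖ ≤ r := by simpa using hx
        calc ‖((a k : ℤ) : ℂ)‖ * ‖x‖^(k+1) ≤ 1 * r^(k+1) :=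
              mul_le_mul (coeff_norm ha _) (pow_le_pow_left₀ (norm_nonneg x) hxr _) (by positivity) zero_le_one
        _ = r^(k+1) := one_mul _
    apply TendstoLocallyUniformlyOn.differentiableOn
      ((h1.mono ball_subset_closedBall).tendstoLocallyUniformlyOn)
    · filter_upwards with t
      apply DifferentiableOn.fun_sum
      intro k _
      exact ((differentiable_pow (k+1)).const_mul _).differentiableOn
    · exact isOpen_ball
  have : DifferentiableAt ℂ (fun w => ∑' k : ℕ, (a k : ℂ) * w^(k+1)) z := by
    apply (hdiff z (by simpa using hzr)).differentiableAt
    exact isOpen_ball.mem_nhds (by simpa using hzr)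
  unfold g
  exact this.const_add 1

lemma g_analyticAt {z : ℂ} (hz : ‖z‖ < 1) : AnalyticAt ℂ (g a) z := by
  have : DifferentiableOn ℂ (g a) (ball (0:ℂ) 1) := fun w hw =>
    (g_differentiableAt ha (by simpa using hw)).differentiableWithinAt
  exact (this.analyticOnNhd isOpen_ball) z (by simpa using hz)


lemma exists_P_zero {lam₀ : ℂ} (h0 : ‖lam₀‖ < 1)
    (hsum : HasSum (fun k : ℕ => (a k : ℂ) * lam₀^(k+1)) (-1))
    {U : Set ℂ} (hU : IsOpen U) (hmem : lam₀ ∈ U) {ε : ℝ} (hε : 0 < ε) :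
    ∃ N : ℕ, ∃ lam₁ : ℂ, dist lam₁ lam₀ < ε ∧ lam₁ ∈ U ∧ ‖lam₁‖ < 1 ∧ P a N lam₁ = 0 := by
  have hg0 : g a lam₀ = 0 := by
    unfold g; rw [hsum.tsum_eq]; ring
  have han : AnalyticAt ℂ (g a) lam₀ := g_analyticAt ha h0
  rcases han.eventually_eq_zero_or_eventually_ne_zero with hzero | hne
  · -- impossible: g ≡ 0 on the ball but g 0 = 1
    exfalso
    have hAOn : AnalyticOnNhd ℂ (g a) (ball (0:ℂ) 1) := by
      have : DifferentiableOn ℂ (g a) (ball (0:ℂ) 1) := fun w hw =>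
        (g_differentiableAt ha (by simpa using hw)).differentiableWithinAt
      exact this.analyticOnNhd isOpen_ball
    have heq : Set.EqOn (g a) 0 (ball (0:ℂ) 1) := by
      apply hAOn.eqOn_zero_of_preconnected_of_frequently_eq_zero
        (convex_ball (0:ℂ) 1).isPreconnected (by simpa using h0)
      exact (hzero.filter_mono nhdsWithin_le_nhds).frequently
    have h1 := heq (by simp : (0:ℂ) ∈ ball (0:ℂ) 1)
    rw [g_zero] at h1
    simpa using h1
  · rw [eventually_nhdsWithin_iff, Metric.eventually_nhds_iff] at hne
    obtain ⟨r₀, hr₀, hball0⟩ := hne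
    obtain ⟨δU, hδU, hUb⟩ := Metric.isOpen_iff.mp hU lam₀ hmem
    set δ := min (min (ε/2) (r₀/2)) (min ((1-‖lam₀‖)/2) (δU/2)) with hδdef
    have hδ0 : 0 < δ := by
      apply lt_min (lt_min (by linarith) (by linarith)) (lt_min (by linarith) (by linarith))
    have hδε : δ ≤ ε/2 := le_trans (min_le_left _ _) (min_le_left _ _)
    have hδr₀ : δ ≤ r₀/2 := le_trans (min_le_left _ _) (min_le_right _ _)
    have hδ1 : δ ≤ (1-‖lam₀‖)/2 := le_trans (min_le_right _ _) (min_le_left _ _)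
    have hδU2 : δ ≤ δU/2 := le_trans (min_le_right _ _) (min_le_right _ _)
    set r := ‖lam₀‖ + δ with hrdef
    have hr1 : r < 1 := by rw [hrdef]; linarith
    have hr0 : 0 ≤ r := by positivity
    have hsphere_norm : ∀ w ∈ sphere lam₀ δ, ‖w‖ ≤ r := by
      intro w hw
      have hd : ‖w - lam₀‖ = δ := by
        rw [← dist_eq_norm]; exact mem_sphere_iff_norm.mp hw ▸ (by rw [dist_eq_norm])
      calc ‖w‖ = ‖(w - lam₀) + lam₀‖ := by rw [sub_add_cancel]
      _ ≤ ‖w - lam₀‖ + ‖lam₀‖ := norm_add_le _ _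
      _ = r := by rw [hd, hrdef]; ring
    have hcont : ContinuousOn (fun w => ‖g a w‖) (sphere lam₀ δ) := by
      apply ContinuousOn.norm
      intro w hw
      exact ((g_differentiableAt ha (lt_of_le_of_lt (hsphere_norm w hw) hr1)).continuousAt).continuousWithinAt
    have hnonempty : (sphere lam₀ δ).Nonempty :=
      NormedSpace.sphere_nonempty.mpr (le_of_lt hδ0)
    obtain ⟨w₀, hw₀, hmin⟩ := (isCompact_sphere lam₀ δ).exists_isMinOn hnonempty hcont
    set η := ‖g a w₀‖ with hηdef
    have hη : 0 < η := by
      rw [hηdef, norm_pos_iff]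
      apply hball0
      · rw [mem_sphere_iff_norm] at hw₀
        rw [dist_eq_norm, hw₀]; linarith
      · intro hcontra
        rw [Set.mem_singleton_iff] at hcontra
        rw [mem_sphere_iff_norm, hcontra] at hw₀
        simp at hw₀; linarith
    have htend : Filter.Tendsto (fun N : ℕ => r^(N+1)*(1-r)⁻¹) Filter.atTop (nhds 0) := by
      have h := (tendsto_pow_atTop_nhds_zero_of_lt_one hr0 hr1).mul_const (r*(1-r)⁻¹)
      rw [zero_mul] at h
      apply h.congr
      intro N; rw [pow_succ]; ring
    obtain ⟨N, hN⟩ := (htend.eventually (gt_mem_nhds (by positivity : (0:ℝ) < η/2))).exists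
    have hzeroex : ∃ μ ∈ closedBall lam₀ δ, P a N μ = 0 := by
      by_contra hcon
      push_neg at hcon
      have hPdiff := P_differentiable (a := a) N
      have hd2 : DiffContOnCl ℂ (fun μ => (P a N μ)⁻¹) (ball lam₀ δ) := by
        constructor
        · intro w hw
          exact ((hPdiff.differentiableAt).inv (hcon w (ball_subset_closedBall hw))).differentiableWithinAt
        · rw [closure_ball lam₀ (ne_of_gt hδ0)]
          intro w hw
          exact (hPdiff.continuous.continuousWithinAt).inv₀ (hcon w hw)
      have hC : ∀ ζ ∈ frontier (ball lam₀ δ), ‖(P a N ζ)⁻¹‖ ≤ (η/2)⁻¹ := by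
        intro ζ hζ
        rw [frontier_ball lam₀ (ne_of_gt hδ0)] at hζ
        have hgζ : η ≤ ‖g a ζ‖ := hmin hζ
        have htail := tail_bound ha hr1 N (hsphere_norm ζ hζ)
        have hPζ : η/2 ≤ ‖P a N ζ‖ := by
          have h5 := norm_sub_norm_le (g a ζ) (P a N ζ)
          linarith
        rw [norm_inv]
        apply inv_anti₀ (by positivity) hPζ
      have happly := Complex.norm_le_of_forall_mem_frontier_norm_le isBounded_ball hd2 hC
        (subset_closure (mem_ball_self hδ0))
      have hP0 : ‖P a N lam₀‖ ≤ r^(N+1)*(1-r)⁻¹ := by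
        have h6 := tail_bound ha hr1 N (show ‖lam₀‖ ≤ r by rw [hrdef]; linarith)
        rw [hg0, zero_sub, norm_neg] at h6
        exact h6
      have hPne := hcon lam₀ (mem_closedBall_self (le_of_lt hδ0))
      have h7 : η/2 ≤ ‖P a N lam₀‖ := by
        have hp : 0 < ‖P a N lam₀‖ := norm_pos_iff.mpr hPne
        rw [norm_inv, inv_le_inv₀ hp (by positivity)] at happly
        exact happly
      linarith
    obtain ⟨μ, hμmem, hμzero⟩ := hzeroex
    rw [mem_closedBall] at hμmem
    refine ⟨N, μ, by linarith, hUb ?_, ?_, hμzero⟩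
    · rw [mem_ball]; linarith
    · have : ‖μ‖ = ‖(μ - lam₀) + lam₀‖ := by rw [sub_add_cancel]
      rw [this]
      calc ‖(μ - lam₀) + lam₀‖ ≤ ‖μ - lam₀‖ + ‖lam₀‖ := norm_add_le _ _
      _ ≤ δ + ‖lam₀‖ := by rw [← dist_eq_norm] at *; linarith
      _ < 1 := by linarith


end SSaux

/-- ℳ ∩ int(H) ⊆ clos(int(ℳ)). -/
theorem mandelbrot_inter_interiorH_subset_closure_interior :
    MSet ∩ interior Hset ⊆ closure (interior MSet) := by
  rintro lam₀ ⟨⟨habs, a, ha, hsum⟩, hint⟩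
  rw [Metric.mem_closure_iff]
  intro ε hε
  obtain ⟨hx0, him0, hH0⟩ := SSaux.interior_Hset_strict hint
  set U₀ : Set ℂ := {l : ℂ | 0 < l.re ∧ l.im ≠ 0 ∧ l.re < (3*(l.re^2+l.im^2)-1)/2} with hU₀def
  have hU₀open : IsOpen U₀ := by
    have e : U₀ = {l : ℂ | 0 < l.re} ∩ ({l : ℂ | l.im ≠ 0} ∩
        {l : ℂ | l.re < (3*(l.re^2+l.im^2)-1)/2}) := rfl
    rw [e]
    apply IsOpen.inter (isOpen_lt continuous_const Complex.continuous_re)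
    apply IsOpen.inter (isOpen_ne_fun Complex.continuous_im continuous_const)
    exact isOpen_lt Complex.continuous_re (by fun_prop)
  have hmemU₀ : lam₀ ∈ U₀ := ⟨hx0, him0, hH0⟩
  have h0 : ‖lam₀‖ < 1 := habs
  obtain ⟨N, lam₁, hdist, hmem₁, hnorm₁, hPzero⟩ :=
    SSaux.exists_P_zero ha h0 hsum hU₀open hmemU₀ (half_pos hε)
  obtain ⟨hx₁, him₁, hH₁⟩ := hmem₁
  obtain ⟨ρ₁, ρ₂, hW₁⟩ := SSaux.exists_W hx₁ him₁ hH₁ hnorm₁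
  obtain ⟨hρ₂pos, hρ₂₁⟩ := SSaux.W_pos hW₁
  set V : Set ℂ := SSaux.W ρ₁ ρ₂ ∩ {l : ℂ | ‖SSaux.P a N l‖ < ρ₂ * ‖l‖^(N+1)} with hVdef
  have hVopen : IsOpen V := by
    apply (SSaux.isOpen_W ρ₁ ρ₂).inter
    apply isOpen_lt
    · exact (SSaux.P_differentiable (a := a) N).continuous.norm
    · fun_prop
  have hlam₁ne : lam₁ ≠ 0 := by
    intro h; apply him₁; rw [h]; rfl
  have hlam₁V : lam₁ ∈ V := by
    refine ⟨hW₁, ?_⟩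
    show ‖SSaux.P a N lam₁‖ < ρ₂ * ‖lam₁‖^(N+1)
    rw [hPzero, norm_zero]
    have h5 : 0 < ‖lam₁‖ := norm_pos_iff.mpr hlam₁ne
    exact mul_pos hρ₂pos (pow_pos h5 _)
  have hVsub : V ⊆ MSet := by
    rintro l ⟨hlW, hlP⟩
    have habs_l : ‖l‖ < 1 := hlW.2.2.1
    have hlne : l ≠ 0 := by
      intro h; apply hlW.2.1; rw [h]; rfl
    have hlpow : l^(N+1) ≠ 0 := pow_ne_zero _ hlne
    refine ⟨habs_l, ?_⟩
    set w : ℂ := -(SSaux.P a N l) / l^(N+1) with hwdef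
    have hwabs : ‖w‖ ≤ ρ₂ := by
      rw [hwdef]
      rw [norm_div, norm_neg, norm_pow]
      rw [div_le_iff₀ (pow_pos (norm_pos_iff.mpr hlne) _)]
      have : (‖l‖)^(N+1) = ‖l‖^(N+1) := rfl
      calc ‖SSaux.P a N l‖ = ‖SSaux.P a N l‖ := rfl
      _ ≤ ρ₂ * ‖l‖^(N+1) := le_of_lt hlP
      _ = ρ₂ * (‖l‖)^(N+1) := rfl
    obtain ⟨d, hd, hdsum⟩ := SSaux.W_hasSum hlW hwabs
    set b : ℕ → ℤ := fun k => if k < N then a k else d (k - N) with hbdef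
    refine ⟨b, ?_, ?_⟩
    · intro k
      rw [hbdef]
      by_cases h : k < N
      · simp only [if_pos h]; exact ha k
      · simp only [if_neg h]; exact hd (k - N)
    · set f : ℕ → ℂ := fun k => (b k : ℂ) * l^(k+1) with hfdef
      have heq : (fun n : ℕ => f (n + N)) = fun n => l^(N+1) * ((d n : ℂ) * l^n) := by
        funext n
        rw [hfdef]
        simp only
        rw [hbdef]
        simp only [if_neg (by omega : ¬ (n + N < N))]
        have h2 : n + N - N = n := by omega
        rw [h2, show n + N + 1 = (N+1)+n by omega, pow_add]
        ring
      have hval : l^(N+1) * w = -(SSaux.P a N l) := by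
        rw [hwdef, mul_div_cancel₀ _ hlpow]
      have h1 : HasSum (fun n : ℕ => f (n + N)) (-(SSaux.P a N l)) := by
        rw [heq, ← hval]
        exact hdsum.mul_left _
      have h2 := (hasSum_nat_add_iff (f := f) N).mp h1
      have h3 : ∑ i ∈ Finset.range N, f i = SSaux.P a N l - 1 := by
        have : ∑ i ∈ Finset.range N, f i = ∑ i ∈ Finset.range N, (a i : ℂ) * l^(i+1) := by
          apply Finset.sum_congr rfl
          intro i hi
          rw [hfdef]
          simp only
          rw [hbdef]
          simp only [if_pos (Finset.mem_range.mp hi)]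
        rw [this]
        show _ = (1 + ∑ k ∈ Finset.range N, (a k : ℂ) * l^(k+1)) - 1
        ring
      rw [h3] at h2
      have h4 : -(SSaux.P a N l) + (SSaux.P a N l - 1) = -1 := by ring
      rw [h4] at h2
      exact h2
  refine ⟨lam₁, interior_maximal hVsub hVopen hlam₁V, ?_⟩
  rw [dist_comm]
  linarith
end
end

section
/- Let H = {λ ∈ ℂ : 1/3 ≤ |λ|² ≤ 1/2 and 0 ≤ Re(λ) ≤ (3|λ|² − 1)/2}. Every λ₀ ∈ ℳ₀ ∩ int(H) is an interior point of ℳ, i.e. ℳ₀ ∩ int(H) ⊆ int(ℳ). -/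
open MeasureTheory Set Pointwise ENNReal

noncomputable section

/-- Rounding to nearest element of {-1,0,1}. -/
def rnd (t : ℝ) : ℤ := if 1 ≤ 2*t then 1 else if 2*t ≤ -1 then -1 else 0

lemma rnd_mem (t : ℝ) : rnd t = -1 ∨ rnd t = 0 ∨ rnd t = 1 := by
  unfold rnd; split_ifs <;> simp

lemma abs_sub_rnd {t : ℝ} (h : |t| ≤ 3/2) : |t - (rnd t : ℝ)| ≤ 1/2 := by
  rw [abs_le] at h ⊢
  unfold rnd
  split_ifs with h1 h2 <;> push_cast <;> constructor <;> linarith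

/-- greedy step on the state (t₀, t₁) representing t₀ + t₁ λ. -/
def gstep (x m : ℝ) (p : ℝ × ℝ) : ℝ × ℝ :=
  (p.2 + 2*(p.1 - (rnd p.1 : ℝ))*x/m, -(p.1 - (rnd p.1 : ℝ))/m)

def gseq (x m : ℝ) (p : ℝ × ℝ) : ℕ → ℝ × ℝ
  | 0 => p
  | k+1 => gstep x m (gseq x m p k)

lemma greedy_rep (lam : ℂ) (x y m : ℝ) (hx : x = lam.re) (hy : y = lam.im)
    (hm : m = x^2 + y^2)
    (hx0 : 0 ≤ x) (hH : 1 + 2*x ≤ 3*m) (hm2 : m ≤ 1/2)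
    (t0 t1 : ℝ) (h0 : |t0| ≤ 3/2) (h1 : |t1| ≤ 3/2 - x/m) :
    ∃ b : ℕ → ℤ, (∀ k, b k = -1 ∨ b k = 0 ∨ b k = 1) ∧
      HasSum (fun k : ℕ => (b k : ℂ) * lam ^ k) ((t0 : ℂ) + (t1 : ℂ) * lam) := by
  have hm0 : 0 < m := by nlinarith
  set p : ℕ → ℝ × ℝ := gseq x m (t0, t1) with hp
  -- invariant
  have inv : ∀ k, |(p k).1| ≤ 3/2 ∧ |(p k).2| ≤ 3/2 - x/m := by
    intro k
    induction k with
    | zero => exact ⟨h0, h1⟩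
    | succ k ih =>
      obtain ⟨ih0, ih1⟩ := ih
      have hu : |(p k).1 - (rnd (p k).1 : ℝ)| ≤ 1/2 := abs_sub_rnd ih0
      set u : ℝ := (p k).1 - (rnd (p k).1 : ℝ) with hu'
      have hpk : p (k+1) = gstep x m (p k) := rfl
      rw [abs_le] at ih1 hu
      constructor
      · rw [hpk]
        show |(p k).2 + 2*u*x/m| ≤ 3/2
        rw [abs_le]
        have hux1 : 2*u*x ≤ x := by nlinarith
        have hux2 : -x ≤ 2*u*x := by nlinarith
        have d1 : 2*u*x/m ≤ x/m := by gcongr ?_/m <;> nlinarith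
        have d2 : -(x/m) ≤ 2*u*x/m := by rw [← neg_div]; gcongr ?_/m <;> nlinarith
        constructor <;> linarith
      · rw [hpk]
        show |(-u/m)| ≤ 3/2 - x/m
        have habs : |(-u/m)| = |u|/m := by
          rw [abs_div, abs_neg, abs_of_pos hm0]
        rw [habs]
        have hrw : 3/2 - x/m = (3*m - 2*x)/(2*m) := by field_simp
        rw [hrw]
        have h2 : (1:ℝ)/2/m ≤ (3*m - 2*x)/(2*m) := by
          rw [div_le_div_iff₀ hm0 (by linarith : (0:ℝ) < 2*m)]
          nlinarith
        have h1 : |u|/m ≤ (1/2)/m := by gcongr <;> first | rfl | exact abs_le.mpr hu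
        linarith
  -- complex quadratic identity for lam
  have hmC : (m : ℂ) ≠ 0 := by
    exact_mod_cast hm0.ne'
  have hlam2 : lam^2 = 2*(x:ℂ)*lam - (m:ℂ) := by
    apply Complex.ext
    · simp [pow_two, Complex.mul_re, Complex.mul_im, Complex.sub_re, Complex.ofReal_re,
        Complex.ofReal_im, ← hx, ← hy, hm]
      ring
    · simp [pow_two, Complex.mul_re, Complex.mul_im, Complex.sub_im, Complex.ofReal_re,
        Complex.ofReal_im, ← hx, ← hy, hm]
      ring
  set b : ℕ → ℤ := fun k => rnd ((p k).1) with hb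
  -- one-step identity
  have key : ∀ k, ((p k).1 : ℂ) + ((p k).2 : ℂ) * lam
      = (b k : ℂ) + lam * (((p (k+1)).1 : ℂ) + ((p (k+1)).2 : ℂ) * lam) := by
    intro k
    have hpk : p (k+1) = gstep x m (p k) := rfl
    rw [hpk]
    show ((p k).1 : ℂ) + ((p k).2 : ℂ) * lam
      = (b k : ℂ) + lam * ((((p k).2 + 2*((p k).1 - ((b k : ℤ) : ℝ))*x/m : ℝ) : ℂ)
          + ((-((p k).1 - ((b k : ℤ) : ℝ))/m : ℝ) : ℂ) * lam)
    push_cast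
    field_simp
    linear_combination (((p k).1 : ℂ) - ((b k : ℤ) : ℂ)) * hlam2
  -- partial sums
  have partial_eq : ∀ N : ℕ, ((t0 : ℂ) + (t1 : ℂ) * lam)
      = (∑ k ∈ Finset.range N, (b k : ℂ) * lam ^ k)
        + lam ^ N * (((p N).1 : ℂ) + ((p N).2 : ℂ) * lam) := by
    intro N
    induction N with
    | zero => simp [hp, gseq]
    | succ N ih =>
      rw [Finset.sum_range_succ, ih, key N]
      ring
  -- norm facts
  have habs2 : ‖lam‖^2 = m := by
    rw [Complex.sq_norm, Complex.normSq_apply, ← hx, ← hy, hm]; ring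
  have habs1 : ‖lam‖ < 1 := by
    nlinarith [norm_nonneg lam, habs2]
  have habs0 : 0 ≤ ‖lam‖ := norm_nonneg lam
  have hxm : 0 ≤ x/m := div_nonneg hx0 hm0.le
  -- bound on remainders
  have hrem : ∀ N, ‖(((p N).1 : ℂ) + ((p N).2 : ℂ) * lam)‖ ≤ 3 := by
    intro N
    obtain ⟨i0, i1⟩ := inv N
    calc ‖(((p N).1 : ℂ) + ((p N).2 : ℂ) * lam)‖
        ≤ ‖((p N).1 : ℂ)‖ + ‖(((p N).2 : ℂ) * lam)‖ :=
          norm_add_le _ _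
      _ ≤ 3/2 + (3/2) * 1 := by
          rw [norm_mul]
          have e0 : ‖((p N).1 : ℂ)‖ ≤ 3/2 := by
            rw [Complex.norm_real, Real.norm_eq_abs]; exact i0
          have e1 : ‖((p N).2 : ℂ)‖ ≤ 3/2 := by
            rw [Complex.norm_real, Real.norm_eq_abs]; exact le_trans i1 (by linarith)
          have e2 : ‖((p N).2 : ℂ)‖ * ‖lam‖ ≤ (3/2) * 1 :=
            mul_le_mul e1 habs1.le habs0 (by norm_num)
          linarith
      _ = 3 := by norm_num
  -- tendsto
  have htend : Filter.Tendsto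
      (fun N => lam ^ N * (((p N).1 : ℂ) + ((p N).2 : ℂ) * lam))
      Filter.atTop (nhds 0) := by
    refine squeeze_zero_norm (a := fun N => 3 * ‖lam‖^N) (fun N => ?_) ?_
    · rw [norm_mul, norm_pow]
      calc ‖lam‖^N * ‖(((p N).1 : ℂ) + ((p N).2 : ℂ) * lam)‖
          ≤ ‖lam‖^N * 3 := by
            gcongr
            exact hrem N
        _ = 3 * ‖lam‖^N := by ring
    · have := (tendsto_pow_atTop_nhds_zero_of_lt_one habs0 habs1).const_mul (3:ℝ)
      simpa using this
  -- summability
  have hsumm : Summable (fun k : ℕ => (b k : ℂ) * lam ^ k) := by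
    apply Summable.of_norm_bounded
      (summable_geometric_of_lt_one habs0 habs1)
    intro k
    rw [norm_mul, norm_pow]
    have hb1 : ‖((b k : ℂ))‖ ≤ 1 := by
      have : b k = rnd ((p k).1) := rfl
      rcases rnd_mem ((p k).1) with h | h | h <;> rw [this, h] <;> norm_num
    calc ‖((b k : ℂ))‖ * ‖lam‖^k
        ≤ 1 * ‖lam‖^k := by
          exact mul_le_mul_of_nonneg_right hb1 (pow_nonneg habs0 k)
      _ = ‖lam‖^k := one_mul _
  -- conclude
  have hS := hsumm.hasSum
  have htendS := hS.tendsto_sum_nat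
  have htend2 : Filter.Tendsto (fun N => ∑ k ∈ Finset.range N, (b k : ℂ) * lam ^ k)
      Filter.atTop (nhds ((t0 : ℂ) + (t1 : ℂ) * lam)) := by
    have heq : (fun N => ∑ k ∈ Finset.range N, (b k : ℂ) * lam ^ k)
        = fun N => ((t0 : ℂ) + (t1 : ℂ) * lam)
          - lam ^ N * (((p N).1 : ℂ) + ((p N).2 : ℂ) * lam) := by
      funext N
      have := partial_eq N
      linear_combination -this
    rw [heq]
    simpa using Filter.Tendsto.sub
      (tendsto_const_nhds (x := (t0 : ℂ) + (t1 : ℂ) * lam) (f := Filter.atTop)) htend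
  have : (∑' k, (b k : ℂ) * lam ^ k) = (t0 : ℂ) + (t1 : ℂ) * lam :=
    tendsto_nhds_unique htendS htend2
  refine ⟨b, fun k => rnd_mem _, ?_⟩
  rwa [this] at hS

/-- Facts extracted from membership in Hset. -/
lemma Hset_facts {l : ℂ} (hl : l ∈ Hset) :
    ‖l‖ < 1 ∧ 0 ≤ l.re ∧ 1 + 2*l.re ≤ 3*(l.re^2 + l.im^2) ∧
      (l.re^2 + l.im^2) ≤ 1/2 ∧ l.im ≠ 0 ∧ l ≠ 0 := by
  obtain ⟨h13, h12, hx0, hxb⟩ := hl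
  have hsq : ‖l‖^2 = l.re^2 + l.im^2 := by
    rw [Complex.sq_norm, Complex.normSq_apply]; ring
  rw [hsq] at h13 h12 hxb
  set x := l.re
  set y := l.im
  have habs1 : ‖l‖ < 1 := by
    nlinarith [norm_nonneg l, hsq]
  have hH : 1 + 2*x ≤ 3*(x^2+y^2) := by linarith
  have hx14 : x ≤ 1/4 := by nlinarith
  have hy2 : y^2 ≥ 1/3 - 1/16 := by nlinarith
  have hyne : y ≠ 0 := by
    intro h; rw [h] at hy2; norm_num at hy2
  have hlne : l ≠ 0 := by
    intro h
    exact hyne (by rw [show y = l.im from rfl, h]; rfl)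
  exact ⟨habs1, hx0, hH, h12, hyne, hlne⟩

/-- Every point of ℳ₀ in the interior of H is an interior point of ℳ. -/
theorem mzero_inter_interiorH_subset_interior :
    MSet0 ∩ interior Hset ⊆ interior MSet := by
  rintro l0 ⟨⟨habs0, n, hn1, a, ha, hP0⟩, hint⟩
  have hl0H : l0 ∈ Hset := interior_subset hint
  obtain ⟨-, -, -, -, hy0ne, hl0ne⟩ := Hset_facts hl0H
  -- the polynomial and the normalized tail target
  set P : ℂ → ℂ := fun l => 1 + ∑ k ∈ Finset.range n, (a k : ℂ) * l ^ (k + 1) with hP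
  set φ : ℂ → ℂ := fun l => -(P l) / l ^ (n + 1) with hφ
  set T1 : ℂ → ℝ := fun l => (φ l).im / l.im with hT1
  set T0 : ℂ → ℝ := fun l => (φ l).re - (T1 l) * l.re with hT0
  -- continuity at l0
  have hPc : ContinuousAt P l0 :=
    (continuous_const.add (continuous_finset_sum _ fun k _ =>
      continuous_const.mul (continuous_pow (k+1)))).continuousAt
  have hφc : ContinuousAt φ l0 := by
    apply ContinuousAt.div (hPc.neg) ((continuous_pow (n+1)).continuousAt)
    exact pow_ne_zero _ hl0ne
  have hφ0 : φ l0 = 0 := by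
    have : P l0 = 0 := hP0
    simp only [hφ, this, neg_zero, zero_div]
  have hT1c : ContinuousAt T1 l0 := by
    exact (Complex.continuous_im.continuousAt.comp hφc).div
      Complex.continuous_im.continuousAt hy0ne
  have hT0c : ContinuousAt T0 l0 := by
    exact (Complex.continuous_re.continuousAt.comp hφc).sub
      (hT1c.mul Complex.continuous_re.continuousAt)
  have hT1v : T1 l0 = 0 := by simp [hT1, hφ0]
  have hT0v : T0 l0 = 0 := by simp [hT0, hT1, hφ0]
  -- neighborhood pieces
  have hmem1 : {t : ℝ | |t| ≤ 1} ∈ nhds (0 : ℝ) := by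
    have : Metric.closedBall (0:ℝ) 1 ∈ nhds (0:ℝ) := Metric.closedBall_mem_nhds _ one_pos
    apply Filter.mem_of_superset this
    intro t ht
    simpa [Real.dist_eq] using ht
  have hE0 : ∀ᶠ l in nhds l0, |T0 l| ≤ 1 := by
    have := hT0c; rw [ContinuousAt, hT0v] at this
    exact this hmem1
  have hE1 : ∀ᶠ l in nhds l0, |T1 l| ≤ 1 := by
    have := hT1c; rw [ContinuousAt, hT1v] at this
    exact this hmem1
  have hEH : ∀ᶠ l in nhds l0, l ∈ Hset :=
    Filter.mem_of_superset (isOpen_interior.mem_nhds hint) interior_subset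
  rw [mem_interior_iff_mem_nhds]
  filter_upwards [hE0, hE1, hEH] with l h0 h1 hlH
  -- show l ∈ MSet
  obtain ⟨habs1, hx0, hH, hm12, hyne, hlne⟩ := Hset_facts hlH
  set x := l.re
  set y := l.im
  set m := x^2 + y^2 with hm
  have hm0 : 0 < m := by nlinarith
  -- decomposition of φ l
  have hzdec : φ l = ((T0 l : ℂ)) + ((T1 l : ℂ)) * l := by
    apply Complex.ext
    · simp [hT0, Complex.add_re, Complex.mul_re, Complex.ofReal_re, Complex.ofReal_im]
    · simp only [hT1, Complex.add_im, Complex.mul_im, Complex.ofReal_re, Complex.ofReal_im]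
      have hy' : l.im ≠ 0 := hyne
      rw [div_mul_cancel₀ _ hy']; ring
  -- bounds for greedy
  have hb0 : |T0 l| ≤ 3/2 := by linarith [h0]
  have hb1 : |T1 l| ≤ 3/2 - x/m := by
    have hxm : x/m ≤ 1/2 := by
      rw [div_le_iff₀ hm0]
      nlinarith
    linarith [h1]
  obtain ⟨b, hbmem, hbsum⟩ := greedy_rep l x y m rfl rfl rfl hx0 hH hm12 (T0 l) (T1 l) hb0 hb1
  rw [← hzdec] at hbsum
  -- assemble coefficients
  refine ⟨habs1, fun k => if k < n then a k else b (k - n), ?_, ?_⟩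
  · intro k
    by_cases h : k < n
    · simpa [h] using ha k
    · simpa [h] using hbmem (k - n)
  · -- HasSum
    set A : ℕ → ℤ := fun k => if k < n then a k else b (k - n) with hA
    have hφl : l ^ (n+1) * φ l = -(P l) := by
      show l ^ (n+1) * (-(P l) / l^(n+1)) = -(P l)
      rw [mul_comm, div_mul_cancel₀]
      exact pow_ne_zero _ hlne
    have hshift : ∀ j : ℕ, (A (j + n) : ℂ) * l ^ (j + n + 1) = l^(n+1) * ((b j : ℂ) * l ^ j) := by
      intro j
      have h1 : ¬ (j + n < n) := by omega
      have h2 : j + n - n = j := by omega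
      simp only [hA, if_neg h1, h2]
      ring
    have hfun : (fun j : ℕ => (A (j + n) : ℂ) * l ^ (j + n + 1))
        = fun j => l^(n+1) * ((b j : ℂ) * l ^ j) := funext hshift
    have hs2 : HasSum (fun j : ℕ => (A (j + n) : ℂ) * l ^ (j + n + 1)) (l^(n+1) * φ l) := by
      rw [hfun]; exact hbsum.mul_left _
    have hs3 := (hasSum_nat_add_iff (f := fun k => (A k : ℂ) * l^(k+1)) n).mp hs2
    have hval : l^(n+1) * φ l + ∑ i ∈ Finset.range n, (A i : ℂ) * l^(i+1) = -1 := by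
      have hsum_eq : ∑ i ∈ Finset.range n, (A i : ℂ) * l^(i+1)
          = ∑ i ∈ Finset.range n, (a i : ℂ) * l^(i+1) := by
        apply Finset.sum_congr rfl
        intro i hi
        rw [Finset.mem_range] at hi
        simp [hA, hi]
      rw [hφl, hsum_eq, hP]
      ring
    rw [← hval]
    exact hs3
end
end

section
/- For every λ in Ω = {λ ∈ ℂ : |λ| < 1, 0 ≤ Re(λ) ≤ |λ|² − 1/2}, the attractor A_λ has non-empty interior. -/
open MeasureTheory Set Pointwise ENNReal

noncomputable section

/-! ### Auxiliary machinery -/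

noncomputable def uvStep (lam : ℂ) (p : ℝ × ℝ) : ℝ × ℝ :=
  if 0 ≤ p.1 then
    (p.2 + 2 * lam.re / Complex.normSq lam * (p.1 - 1), (1 - p.1) / Complex.normSq lam)
  else
    (p.2 + 2 * lam.re / Complex.normSq lam * (p.1 + 1), (-1 - p.1) / Complex.normSq lam)

noncomputable def uvSign (p : ℝ × ℝ) : ℤ := if 0 ≤ p.1 then 1 else -1

noncomputable def uvSeq (lam : ℂ) (u v : ℝ) : ℕ → ℝ × ℝ := fun n => (uvStep lam)^[n] (u, v)

lemma uv_core {s q u v : ℝ} (hs : 0 ≤ s) (hq : 0 < q) (hkey : 1 + 2 * s ≤ 2 * q)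
    (hu0 : 0 ≤ u) (hu2 : u ≤ 2) (hv : |v| ≤ 1 / q) :
    |v + 2 * s / q * (u - 1)| ≤ 2 ∧ |(1 - u) / q| ≤ 1 / q := by
  have habsu : |u - 1| ≤ 1 := by rw [abs_le]; constructor <;> linarith
  have hterm : |2 * s / q * (u - 1)| ≤ 2 * s / q * 1 := by
    rw [abs_mul, abs_of_nonneg (by positivity : (0:ℝ) ≤ 2 * s / q)]
    exact mul_le_mul_of_nonneg_left habsu (by positivity)
  constructor
  · calc |v + 2 * s / q * (u - 1)| ≤ |v| + |2 * s / q * (u - 1)| := abs_add_le _ _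
      _ ≤ 1 / q + 2 * s / q * 1 := add_le_add hv hterm
      _ = (1 + 2 * s) / q := by field_simp
      _ ≤ 2 := by rw [div_le_iff₀ hq]; linarith
  · rw [abs_div, abs_of_pos hq]
    gcongr
    rw [abs_le]; constructor <;> linarith

lemma uvStep_mem {lam : ℂ} (hs : 0 ≤ lam.re)
    (hq : 0 < Complex.normSq lam) (hkey : 1 + 2 * lam.re ≤ 2 * Complex.normSq lam)
    {p : ℝ × ℝ} (hp1 : |p.1| ≤ 2) (hp2 : |p.2| ≤ 1 / Complex.normSq lam) :
    |(uvStep lam p).1| ≤ 2 ∧ |(uvStep lam p).2| ≤ 1 / Complex.normSq lam := by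
  set q := Complex.normSq lam
  rcases le_or_gt 0 p.1 with h | h
  · have := uv_core hs hq hkey h (abs_le.mp hp1).2 hp2
    simpa [uvStep, if_pos h] using this
  · have h1 : 0 ≤ -p.1 := by linarith
    have h2 : -p.1 ≤ 2 := by have := (abs_le.mp hp1).1; linarith
    have h3 : |(-p.2)| ≤ 1 / q := by rwa [abs_neg]
    obtain ⟨c1, c2⟩ := uv_core hs hq hkey h1 h2 h3
    rw [uvStep, if_neg (by linarith)]
    refine ⟨?_, ?_⟩
    · have e : -p.2 + 2 * lam.re / q * (-p.1 - 1) = -(p.2 + 2 * lam.re / q * (p.1 + 1)) := by ring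
      rw [e, abs_neg] at c1; exact c1
    · have e : (1 - -p.1) / q = -((-1 - p.1) / q) := by ring
      rw [e, abs_neg] at c2; exact c2

lemma uv_emb_step {lam : ℂ} (hq : Complex.normSq lam ≠ 0) (p : ℝ × ℝ) :
    (p.1 : ℂ) + lam * p.2 =
      (uvSign p : ℂ) + lam * (((uvStep lam p).1 : ℂ) + lam * ((uvStep lam p).2 : ℂ)) := by
  have hconj : (starRingEnd ℂ) lam = 2 * (lam.re : ℂ) - lam := by
    have h := Complex.add_conj lam
    push_cast at h
    linear_combination h
  have hlamsq : (Complex.normSq lam : ℂ) = lam * (2 * (lam.re : ℂ) - lam) := by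
    rw [← hconj, Complex.mul_conj]
  have hq' : (Complex.normSq lam : ℂ) ≠ 0 := by exact_mod_cast hq
  rcases le_or_gt 0 p.1 with h | h
  · rw [uvSign, uvStep, if_pos h, if_pos h]
    push_cast
    field_simp
    ring_nf
    linear_combination (p.1 - 1 : ℂ) * hlamsq
  · rw [uvSign, uvStep, if_neg (by linarith), if_neg (by linarith)]
    push_cast
    field_simp
    ring_nf
    linear_combination (p.1 + 1 : ℂ) * hlamsq

lemma mem_attr_of_uv (lam : ℂ) (hlt : ‖lam‖ < 1) (hs : 0 ≤ lam.re)
    (hkey : 1 + 2 * lam.re ≤ 2 * Complex.normSq lam)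
    (u v : ℝ) (hu : |u| ≤ 2) (hv : |v| ≤ 1 / Complex.normSq lam) :
    ((u : ℂ) + lam * v) ∈ Attr lam := by
  set q := Complex.normSq lam with hqdef
  have hq : 0 < q := by linarith
  have hqne : q ≠ 0 := hq.ne'
  set S : ℕ → ℝ × ℝ := uvSeq lam u v with hSdef
  have hS0 : S 0 = (u, v) := rfl
  have hSsucc : ∀ n, S (n + 1) = uvStep lam (S n) := fun n =>
    Function.iterate_succ_apply' (uvStep lam) n (u, v)
  have hbound : ∀ n, |(S n).1| ≤ 2 ∧ |(S n).2| ≤ 1 / q := by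
    intro n
    induction n with
    | zero => exact ⟨hu, hv⟩
    | succ n ih => rw [hSsucc]; exact uvStep_mem hs hq hkey ih.1 ih.2
  have key : ∀ n, (u : ℂ) + lam * v =
      (∑ j ∈ Finset.range n, (uvSign (S j) : ℂ) * lam ^ j)
        + lam ^ n * (((S n).1 : ℂ) + lam * ((S n).2 : ℂ)) := by
    intro n
    induction n with
    | zero => simp [hS0]
    | succ n ih =>
      rw [Finset.sum_range_succ, ih, hSsucc n, uv_emb_step hqne (S n)]
      ring
  have hnormA : ∀ n, ‖((uvSign (S n) : ℂ))‖ = 1 := by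
    intro n; unfold uvSign; split <;> simp
  have hsummable : Summable (fun n : ℕ => (uvSign (S n) : ℂ) * lam ^ n) := by
    refine Summable.of_norm ?_
    refine Summable.of_nonneg_of_le (fun n => norm_nonneg _) (fun n => ?_)
      (summable_geometric_of_lt_one (norm_nonneg lam) hlt)
    rw [norm_mul, hnormA, one_mul, norm_pow]
  have h4 : ∀ n, ‖(((S n).1 : ℝ) : ℂ) + lam * ((S n).2 : ℂ)‖ ≤ 4 := by
    intro n
    obtain ⟨b1, b2⟩ := hbound n
    have e1 : ‖(((S n).1 : ℝ) : ℂ)‖ = |(S n).1| := by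
      rw [Complex.norm_real, Real.norm_eq_abs]
    have e2 : ‖lam * ((S n).2 : ℂ)‖ ≤ 1 * (1 / q) := by
      rw [norm_mul, Complex.norm_real, Real.norm_eq_abs]
      exact mul_le_mul hlt.le b2 (abs_nonneg _) zero_le_one
    have hq12 : 1 / q ≤ 2 := by rw [div_le_iff₀ hq]; linarith
    have htri := norm_add_le ((((S n).1 : ℝ) : ℂ)) (lam * ((S n).2 : ℂ))
    linarith [htri, e2, b1, e1.le, e1.ge]
  have htend0 : Filter.Tendsto
      (fun n => lam ^ n * (((S n).1 : ℂ) + lam * ((S n).2 : ℂ)))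
      Filter.atTop (nhds 0) := by
    apply squeeze_zero_norm (a := fun n => 4 * ‖lam‖ ^ n)
    · intro n
      rw [norm_mul, norm_pow, mul_comm (4 : ℝ)]
      exact mul_le_mul_of_nonneg_left (h4 n) (pow_nonneg (norm_nonneg lam) n)
    · simpa using
        (tendsto_pow_atTop_nhds_zero_of_lt_one (norm_nonneg lam) hlt).const_mul (4 : ℝ)
  have htends : Filter.Tendsto
      (fun n => ∑ j ∈ Finset.range n, (uvSign (S j) : ℂ) * lam ^ j)
      Filter.atTop (nhds ((u : ℂ) + lam * v)) := by
    have heq : (fun n => ∑ j ∈ Finset.range n, (uvSign (S j) : ℂ) * lam ^ j)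
        = fun n => ((u : ℂ) + lam * v)
            - lam ^ n * (((S n).1 : ℂ) + lam * ((S n).2 : ℂ)) := by
      funext n; rw [key n]; ring
    rw [heq]
    have := Filter.Tendsto.sub
      (tendsto_const_nhds : Filter.Tendsto (fun _ : ℕ => (u : ℂ) + lam * v) Filter.atTop _)
      htend0
    simpa using this
  have hhs : HasSum (fun n : ℕ => (uvSign (S n) : ℂ) * lam ^ n) ((u : ℂ) + lam * v) := by
    have h1 := hsummable.hasSum
    rwa [tendsto_nhds_unique h1.tendsto_sum_nat htends] at h1
  refine ⟨fun n => uvSign (S n), fun n => ?_, hhs⟩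
  rcases le_or_gt 0 (S n).1 with h | h
  · right; simp [uvSign, h]
  · left; simp [uvSign, not_le.mpr h]


/-- For every λ with |λ| < 1 and 0 ≤ Re λ ≤ |λ|² − 1/2,
the attractor A_λ has non-empty interior. -/
theorem attractor_nonempty_interior_of_mem_Omega (lam : ℂ)
    (h1 : ‖lam‖ < 1) (h2 : 0 ≤ lam.re)
    (h3 : lam.re ≤ (‖lam‖) ^ 2 - 1 / 2) :
    (interior (Attr lam)).Nonempty := by
  have hsq := Complex.sq_norm lam
  set q := Complex.normSq lam with hqdef
  have h3' : lam.re ≤ q - 1 / 2 := by rw [← hsq]; exact h3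
  have hkey : 1 + 2 * lam.re ≤ 2 * q := by linarith
  have hq : 0 < q := by linarith
  have hq1 : q < 1 := by
    rw [← hsq]
    nlinarith [norm_nonneg lam]
  have hnq : q = lam.re * lam.re + lam.im * lam.im := Complex.normSq_apply lam
  have hs12 : lam.re ≤ 1 / 2 := by linarith
  have him2 : 1 / 2 ≤ lam.im * lam.im := by
    nlinarith [mul_nonneg h2 (by linarith : (0:ℝ) ≤ 1 - lam.re)]
  have him : lam.im ≠ 0 := by
    intro h0
    rw [h0] at him2
    norm_num at him2
  refine ⟨0, ?_⟩
  rw [mem_interior]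
  refine ⟨Metric.ball 0 (1 / 2), ?_, Metric.isOpen_ball, Metric.mem_ball_self (by norm_num)⟩
  intro z hz
  have hzabs : ‖z‖ < 1 / 2 := by
    simpa [Complex.dist_eq] using hz
  set v : ℝ := z.im / lam.im with hvdef
  set u : ℝ := z.re - lam.re * v with hudef
  have hzre : |z.re| ≤ 1 / 2 := (Complex.abs_re_le_norm z).trans hzabs.le
  have hzim : |z.im| ≤ 1 / 2 := (Complex.abs_im_le_norm z).trans hzabs.le
  have hzim2 : z.im * z.im ≤ 1 / 4 := by
    nlinarith [abs_nonneg z.im, sq_abs z.im, hzim]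
  have hv2 : v * v ≤ 1 / 2 := by
    rw [hvdef, div_mul_div_comm]
    rw [div_le_iff₀ (by nlinarith : (0:ℝ) < lam.im * lam.im)]
    nlinarith
  have hv1 : |v| ≤ 1 := abs_le_one_iff_mul_self_le_one.mpr (by linarith)
  have hvb : |v| ≤ 1 / q := by
    have : (1:ℝ) ≤ 1 / q := by rw [le_div_iff₀ hq]; linarith
    linarith
  have hub : |u| ≤ 2 := by
    have hmv : |lam.re * v| ≤ 1 / 2 * 1 := by
      rw [abs_mul, abs_of_nonneg h2]
      exact mul_le_mul hs12 hv1 (abs_nonneg v) (by norm_num)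
    calc |u| = |z.re + -(lam.re * v)| := by rw [hudef, sub_eq_add_neg]
      _ ≤ |z.re| + |(-(lam.re * v))| := abs_add_le _ _
      _ ≤ 1 / 2 + 1 / 2 * 1 := by rw [abs_neg]; exact add_le_add hzre hmv
      _ ≤ 2 := by norm_num
  have hz2 : z = (u : ℂ) + lam * (v : ℂ) := by
    rw [Complex.ext_iff]
    constructor
    · simp only [Complex.add_re, Complex.ofReal_re, Complex.mul_re, Complex.ofReal_im]
      rw [hudef]
      ring
    · simp only [Complex.add_im, Complex.ofReal_im, Complex.mul_im, Complex.ofReal_re]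
      rw [hvdef]
      field_simp
      ring
  rw [hz2]
  exact mem_attr_of_uv lam h1 h2 hkey u v hub hvb
end
end

section
/- A power series of the form f(z) = 1 + ∑_{n=1}^∞ a_n z^n with real coefficients a_n ∈ [−1,1] cannot have a non-real double zero of modulus less than 2·5^{-5/8}. That is, if λ ∈ ℂ is non-real with |λ| < 1 and f(λ) = f'(λ) = 0, then |λ| ≥ 2·5^{-5/8}. -/
open MeasureTheory Set Pointwise ENNReal

noncomputable section

section AuxForDoubleZero
open MeasureTheory Set Complex Filter Topology intervalIntegral Metric

lemma my_hasDerivAt_conj {F : ℂ → ℂ} (hs : ∀ z, F ((starRingEnd ℂ) z) = (starRingEnd ℂ) (F z))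
    {x d : ℂ} (h : HasDerivAt F d x) :
    HasDerivAt F ((starRingEnd ℂ) d) ((starRingEnd ℂ) x) := by
  rw [hasDerivAt_iff_tendsto_slope] at h ⊢
  have hmap : 𝓝[≠] ((starRingEnd ℂ) x) = Filter.map (starRingEnd ℂ) (𝓝[≠] x) := by
    have := Complex.conjCLE.toHomeomorph.map_punctured_nhds_eq x
    exact this.symm
  rw [hmap, Filter.tendsto_map'_iff]
  have hfun : (slope F ((starRingEnd ℂ) x)) ∘ (starRingEnd ℂ)
      = (starRingEnd ℂ) ∘ slope F x := by
    funext z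
    simp only [Function.comp_apply, slope_def_field, hs, ← map_sub, ← map_div₀]
  rw [hfun]
  exact (Complex.continuous_conj.tendsto d).comp h

lemma my_integral_exp_int (k : ℤ) (hk : k ≠ 0) :
    ∫ θ in (0:ℝ)..(2*Real.pi), Complex.exp (k * θ * Complex.I) = 0 := by
  have hc : (k : ℂ) * Complex.I ≠ 0 := by
    simp [Complex.I_ne_zero, hk]
  have heq : ∀ θ : ℝ, (k : ℂ) * θ * Complex.I = ((k : ℂ) * Complex.I) * θ := by
    intro θ; ring
  simp_rw [heq]
  rw [integral_exp_mul_complex hc]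
  have h2 : (k:ℂ) * Complex.I * (2*Real.pi : ℝ) = (k:ℤ) * (2 * Real.pi * Complex.I) := by
    push_cast; ring
  rw [h2, Complex.exp_int_mul_two_pi_mul_I]
  simp
lemma my_parseval {c : ℕ → ℂ} (hc : ∀ n, ‖c n‖ ≤ 1) {ρ : ℝ} (h0 : 0 < ρ) (h1 : ρ < 1) :
    ∫ θ in (0:ℝ)..(2*Real.pi), ‖∑' n : ℕ, c n * (circleMap 0 ρ θ)^n‖^2
      ≤ 2*Real.pi * (1 - ρ^2)⁻¹ := by
  have twopi : (0:ℝ) ≤ 2*Real.pi := by positivity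
  set u : ℕ → ℝ → ℂ := fun n θ => c n * (circleMap 0 ρ θ)^n with hu
  have hnorm : ∀ n θ, ‖u n θ‖ ≤ ρ^n := by
    intro n θ
    rw [hu]
    simp only [norm_mul, norm_pow, norm_circleMap_zero, abs_of_pos h0]
    calc ‖c n‖ * ρ^n ≤ 1 * ρ^n := by
          apply mul_le_mul_of_nonneg_right (hc n) (by positivity)
      _ = ρ^n := one_mul _
  have hgeo : Summable fun n : ℕ => ρ^n := summable_geometric_of_lt_one h0.le h1
  have hsum : ∀ θ, Summable fun n => ‖u n θ‖ := fun θ =>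
    Summable.of_nonneg_of_le (fun n => norm_nonneg _) (fun n => hnorm n θ) hgeo
  set v : ℕ × ℕ → ℝ → ℂ := fun p θ => u p.1 θ * (starRingEnd ℂ) (u p.2 θ) with hv
  -- pointwise expansion
  have hpt : ∀ θ, ((‖∑' n, u n θ‖^2 : ℝ) : ℂ) = ∑' p : ℕ×ℕ, v p θ := by
    intro θ
    have e1 : ((‖∑' n, u n θ‖^2 : ℝ) : ℂ)
        = (∑' n, u n θ) * (starRingEnd ℂ) (∑' n, u n θ) := by
      rw [Complex.mul_conj]
      norm_cast
      rw [Complex.sq_norm]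
    have e2 : (starRingEnd ℂ) (∑' n, u n θ) = ∑' n, (starRingEnd ℂ) (u n θ) := by
      exact tsum_star
    rw [e1, e2, tsum_mul_tsum_of_summable_norm (hsum θ) (by simpa using hsum θ)]
  have hvnorm : ∀ p : ℕ×ℕ, ∀ θ, ‖v p θ‖ ≤ ρ^p.1 * ρ^p.2 := by
    rintro ⟨m,n⟩ θ
    rw [hv]
    simp only [norm_mul, RCLike.norm_conj]
    exact mul_le_mul (hnorm m θ) (hnorm n θ) (norm_nonneg _) (by positivity)
  have hvcont : ∀ p : ℕ×ℕ, Continuous (v p) := by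
    rintro ⟨m,n⟩
    apply Continuous.mul
    · exact continuous_const.mul ((continuous_circleMap 0 ρ).pow m)
    · exact Complex.continuous_conj.comp (continuous_const.mul ((continuous_circleMap 0 ρ).pow n))
  have hInt : ∀ p : ℕ×ℕ, IntegrableOn (v p) (Ioc (0:ℝ) (2*Real.pi)) :=
    fun p => (hvcont p).integrableOn_Ioc
  have hgeo2 : Summable (fun p : ℕ×ℕ => ρ^p.1 * ρ^p.2) :=
    hgeo.mul_of_nonneg hgeo (fun n => by positivity) (fun n => by positivity)
  have hSumInt : Summable fun p : ℕ×ℕ => ∫ θ in Ioc (0:ℝ) (2*Real.pi), ‖v p θ‖ := by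
    apply Summable.of_nonneg_of_le
        (fun p => integral_nonneg (fun θ => norm_nonneg _))
        (fun p => ?_) (hgeo2.mul_left (2*Real.pi))
    calc ∫ θ in Ioc (0:ℝ) (2*Real.pi), ‖v p θ‖
        ≤ ∫ _θ in Ioc (0:ℝ) (2*Real.pi), (ρ^p.1 * ρ^p.2) := by
          apply setIntegral_mono_on ((hvcont p).norm.integrableOn_Ioc)
            (integrableOn_const measure_Ioc_lt_top.ne)
            measurableSet_Ioc
          exact fun θ _ => hvnorm p θ
      _ = 2*Real.pi * (ρ^p.1 * ρ^p.2) := by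
          rw [setIntegral_const]
          simp [Real.volume_Ioc, ENNReal.toReal_ofReal twopi, Real.pi_pos.le]
  have hswap : ∫ θ in Ioc (0:ℝ) (2*Real.pi), (∑' p : ℕ×ℕ, v p θ)
      = ∑' p : ℕ×ℕ, ∫ θ in Ioc (0:ℝ) (2*Real.pi), v p θ :=
    (integral_tsum_of_summable_integral_norm hInt hSumInt).symm
  -- compute each integral
  have hval : ∀ p : ℕ×ℕ, (∫ θ in Ioc (0:ℝ) (2*Real.pi), v p θ)
      = if p.2 = p.1 then ((2*Real.pi * Complex.normSq (c p.1) * ρ^(2*p.1) : ℝ) : ℂ) else 0 := by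
    rintro ⟨m,n⟩
    have hcm : circleMap 0 ρ = fun θ : ℝ => (ρ:ℂ) * Complex.exp (θ * Complex.I) := by
      funext θ; simp [circleMap]
    have hun : ∀ (k:ℕ) (θ:ℝ), u k θ = c k * (ρ:ℂ)^k * Complex.exp ((k:ℕ) * (θ * Complex.I)) := by
      intro k θ
      rw [hu, hcm]
      simp only [mul_pow, Complex.exp_nat_mul]
      ring
    have harg : ∀ (k:ℕ) (θ:ℝ), (starRingEnd ℂ) ((k:ℂ) * (θ * Complex.I))
        = -((k:ℂ) * (θ * Complex.I)) := by
      intro k θ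
      simp only [map_mul, Complex.conj_ofReal, Complex.conj_I, map_natCast]
      ring
    have hconj : ∀ (k:ℕ) (θ:ℝ), (starRingEnd ℂ) (u k θ)
        = (starRingEnd ℂ) (c k) * (ρ:ℂ)^k * Complex.exp (-((k:ℕ) * (θ * Complex.I))) := by
      intro k θ
      rw [hun, map_mul, map_mul, map_pow, Complex.conj_ofReal, ← Complex.exp_conj, harg]
    have hvexp : ∀ θ:ℝ, v (m,n) θ = (c m * (starRingEnd ℂ) (c n) * (ρ:ℂ)^(m+n))
        * Complex.exp ((((m:ℤ) - (n:ℤ) : ℤ):ℂ) * θ * Complex.I) := by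
      intro θ
      have hexpand : ((((m:ℤ) - (n:ℤ) : ℤ):ℂ) * θ * Complex.I)
          = (m:ℕ) * (θ * Complex.I) + -((n:ℕ) * (θ * Complex.I)) := by
        push_cast; ring
      simp only [hv]
      rw [hconj n θ, hun m θ, hexpand, Complex.exp_add, pow_add]
      ring
    simp_rw [hvexp]
    rw [MeasureTheory.integral_const_mul]
    rcases eq_or_ne n m with rfl | hne
    · simp only [if_pos rfl]
      have : (((n:ℤ) - (n:ℤ) : ℤ):ℂ) = 0 := by push_cast; ring
      rw [this]
      simp only [zero_mul, Complex.exp_zero]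
      rw [setIntegral_const]
      rw [Complex.mul_conj]
      simp only [measureReal_def, Real.volume_Ioc, sub_zero, ENNReal.toReal_ofReal twopi, Complex.real_smul,
        mul_one]
      push_cast
      ring
    · rw [if_neg (by simpa using hne)]
      have hk : (m:ℤ) - (n:ℤ) ≠ 0 := by
        simpa [sub_eq_zero] using fun h => hne (by exact_mod_cast h.symm)
      have := my_integral_exp_int ((m:ℤ)-(n:ℤ)) hk
      rw [intervalIntegral.integral_of_le twopi] at this
      rw [this, mul_zero]
  -- sum the diagonal
  have hnormSq_le : ∀ m:ℕ, Complex.normSq (c m) ≤ 1 := by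
    intro m
    rw [← Complex.sq_norm]
    calc ‖c m‖ ^2 ≤ 1^2 := by
          apply pow_le_pow_left₀ (by positivity) (hc m)
      _ = 1 := one_pow 2
  have hWs : Summable (fun p : ℕ×ℕ => if p.2 = p.1
      then ((2*Real.pi * Complex.normSq (c p.1) * ρ^(2*p.1) : ℝ) : ℂ) else 0) := by
    apply Summable.of_norm
    apply Summable.of_nonneg_of_le (fun p => norm_nonneg _) (fun p => ?_)
      (hgeo2.mul_left (2*Real.pi))
    by_cases hp : p.2 = p.1
    · rw [if_pos hp, hp, Complex.norm_real, Real.norm_of_nonneg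
        (by have := Complex.normSq_nonneg (c p.1); positivity),
        show 2*p.1 = p.1 + p.1 from two_mul p.1, pow_add]
      calc 2*Real.pi * Complex.normSq (c p.1) * (ρ^p.1 * ρ^p.1)
          ≤ 2*Real.pi * 1 * (ρ^p.1 * ρ^p.1) := by
            apply mul_le_mul_of_nonneg_right _ (by positivity)
            apply mul_le_mul_of_nonneg_left (hnormSq_le p.1) twopi
        _ = 2*Real.pi * (ρ^p.1 * ρ^p.1) := by ring
    · rw [if_neg hp, norm_zero]
      positivity
  have hdiag : (∑' p : ℕ×ℕ, if p.2 = p.1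
      then ((2*Real.pi * Complex.normSq (c p.1) * ρ^(2*p.1) : ℝ) : ℂ) else 0)
      = ∑' m:ℕ, ((2*Real.pi * Complex.normSq (c m) * ρ^(2*m) : ℝ) : ℂ) := by
    rw [Summable.tsum_prod' hWs (fun m => hWs.prod_factor m)]
    congr 1
    funext m
    simpa using tsum_ite_eq m ((2*Real.pi * Complex.normSq (c m) * ρ^(2*m) : ℝ) : ℂ)
  -- real summability of diagonal
  have hrs : Summable (fun m:ℕ => 2*Real.pi * Complex.normSq (c m) * ρ^(2*m)) := by
    apply Summable.of_nonneg_of_le (fun m => by have := Complex.normSq_nonneg (c m); positivity) (fun m => ?_)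
      ((summable_geometric_of_lt_one (r := ρ^2) (by positivity) (by nlinarith)).mul_left (2*Real.pi))
    calc 2*Real.pi * Complex.normSq (c m) * ρ^(2*m)
        ≤ 2*Real.pi * 1 * ρ^(2*m) := by
          apply mul_le_mul_of_nonneg_right _ (by positivity)
          apply mul_le_mul_of_nonneg_left (hnormSq_le m) twopi
      _ = 2*Real.pi * (ρ^2)^m := by rw [← pow_mul]; ring
  -- combine
  have hC : (∫ θ in Ioc (0:ℝ) (2*Real.pi), ((‖∑' n, u n θ‖^2 : ℝ) : ℂ))
      = ((∑' m:ℕ, 2*Real.pi * Complex.normSq (c m) * ρ^(2*m) : ℝ) : ℂ) := by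
    rw [show (fun θ => ((‖∑' n, u n θ‖^2 : ℝ) : ℂ)) = fun θ => ∑' p : ℕ×ℕ, v p θ from
      funext hpt] at *
    rw [hswap]
    simp_rw [hval]
    rw [hdiag, Complex.ofReal_tsum]
  have h2 := _root_.integral_ofReal (𝕜 := ℂ) (f := fun θ => ‖∑' n, u n θ‖^2)
    (μ := volume.restrict (Ioc (0:ℝ) (2*Real.pi)))
  have h3 : ((∫ θ in Ioc (0:ℝ) (2*Real.pi), ‖∑' n, u n θ‖^2 : ℝ) : ℂ)
      = ((∑' m:ℕ, 2*Real.pi * Complex.normSq (c m) * ρ^(2*m) : ℝ) : ℂ) := h2.symm.trans hC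
  have hR : (∫ θ in Ioc (0:ℝ) (2*Real.pi), ‖∑' n, u n θ‖^2)
      = ∑' m:ℕ, 2*Real.pi * Complex.normSq (c m) * ρ^(2*m) := by
    exact_mod_cast h3
  rw [intervalIntegral.integral_of_le twopi]
  rw [hR]
  have hbound : ∑' m:ℕ, 2*Real.pi * Complex.normSq (c m) * ρ^(2*m)
      ≤ ∑' m:ℕ, 2*Real.pi * (ρ^2)^m := by
    apply Summable.tsum_le_tsum _ hrs
      ((summable_geometric_of_lt_one (r := ρ^2) (by positivity) (by nlinarith)).mul_left
        (2*Real.pi))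
    intro m
    calc 2*Real.pi * Complex.normSq (c m) * ρ^(2*m)
        ≤ 2*Real.pi * 1 * ρ^(2*m) := by
          apply mul_le_mul_of_nonneg_right _ (by positivity)
          apply mul_le_mul_of_nonneg_left (hnormSq_le m) twopi
      _ = 2*Real.pi * (ρ^2)^m := by rw [← pow_mul]; ring
  refine hbound.trans ?_
  rw [tsum_mul_left, tsum_geometric_of_lt_one (by positivity) (by nlinarith)]


end AuxForDoubleZero

section MainDoubleZero
open MeasureTheory Set Complex Filter Topology intervalIntegral Metric

set_option maxHeartbeats 1000000 in
/-- A power series `1 + ∑_{n≥1} aₙ zⁿ` with real coefficients in [−1,1]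
has no non-real double zero of modulus less than `2·5^{-5/8}`. -/
theorem no_nonreal_double_zero_of_small_modulus (a : ℕ → ℝ)
    (ha : ∀ n, |a n| ≤ 1) (lam : ℂ) (hnonreal : lam.im ≠ 0)
    (hlt : ‖lam‖ < 1)
    (hzero : (1 : ℂ) + ∑' n : ℕ, (a n : ℂ) * lam ^ (n + 1) = 0)
    (hdzero : deriv (fun z : ℂ => 1 + ∑' n : ℕ, (a n : ℂ) * z ^ (n + 1)) lam = 0) :
    2 * (5 : ℝ) ^ (-(5 / 8) : ℝ) ≤ ‖lam‖ := by
  set r := ‖lam‖ with hr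
  have hlam0 : lam ≠ 0 := fun h => hnonreal (by simp [h])
  have hrpos : 0 < r := by simpa [hr] using (norm_pos_iff.2 hlam0)
  set F : ℂ → ℂ := fun z : ℂ => 1 + ∑' n : ℕ, (a n : ℂ) * z ^ (n + 1) with hF
  set c : ℕ → ℂ := fun n => Nat.casesOn n 1 fun k => ((a k : ℝ) : ℂ) with hcdef
  have hcnorm : ∀ n, ‖c n‖ ≤ 1 := by
    intro n
    cases n with
    | zero => simp [hcdef]
    | succ k => simpa [hcdef, Complex.norm_real] using ha k
  have hsumc : ∀ z : ℂ, ‖z‖ < 1 → Summable fun n => c n * z ^ n := by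
    intro z hz
    apply Summable.of_norm
    apply Summable.of_nonneg_of_le (fun n => norm_nonneg _) (fun n => ?_)
      (summable_geometric_of_lt_one (norm_nonneg z) hz)
    rw [norm_mul, norm_pow]
    calc ‖c n‖ * ‖z‖^n ≤ 1 * ‖z‖^n :=
          mul_le_mul_of_nonneg_right (hcnorm n) (by positivity)
      _ = ‖z‖^n := one_mul _
  have hFeq : ∀ z : ℂ, ‖z‖ < 1 → F z = ∑' n, c n * z ^ n := by
    intro z hz
    rw [Summable.tsum_eq_zero_add (hsumc z hz)]
    simp [hcdef, hF]
  -- differentiability of F on the unit ball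
  set p : FormalMultilinearSeries ℂ ℂ ℂ :=
    fun n => ContinuousMultilinearMap.mkPiRing ℂ (Fin n) (c n) with hp
  have hprad : 1 ≤ p.radius := by
    apply ENNReal.le_of_forall_nnreal_lt
    intro t ht
    apply p.le_radius_of_bound 1
    intro n
    have ht1 : (t:ℝ) ≤ 1 := le_of_lt (by exact_mod_cast ht)
    have : ‖p n‖ = ‖c n‖ := by rw [hp]; exact ContinuousMultilinearMap.norm_mkPiRing (c n)
    rw [this]
    calc ‖c n‖ * (t:ℝ)^n ≤ 1 * 1 := by
          apply mul_le_mul (hcnorm n) (pow_le_one₀ t.2 ht1) (pow_nonneg t.2 n) zero_le_one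
      _ = 1 := one_mul 1
  have hpsum : ∀ z : ℂ, ‖z‖ < 1 → p.sum z = ∑' n, c n * z ^ n := by
    intro z hz
    rw [FormalMultilinearSeries.sum]
    congr 1
    funext n
    rw [hp]
    simp [ContinuousMultilinearMap.mkPiRing_apply, smul_eq_mul, mul_comm]
  have hsub : Metric.ball (0:ℂ) 1 ⊆ EMetric.ball (0:ℂ) p.radius := by
    intro x hx
    show edist x 0 < p.radius
    rw [edist_zero_right]
    calc (‖x‖₊ : ENNReal) < 1 := by
          rw [← ENNReal.coe_one, ENNReal.coe_lt_coe]
          exact_mod_cast mem_ball_zero_iff.1 hx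
      _ ≤ p.radius := hprad
  have hFdiff : DifferentiableOn ℂ F (Metric.ball 0 1) := by
    have hd1 : DifferentiableOn ℂ p.sum (Metric.ball 0 1) :=
      ((p.hasFPowerSeriesOnBall (lt_of_lt_of_le zero_lt_one hprad)).differentiableOn).mono hsub
    apply hd1.congr
    intro x hx
    rw [hFeq x (mem_ball_zero_iff.1 hx), hpsum x (mem_ball_zero_iff.1 hx)]
  have hmem : lam ∈ Metric.ball (0:ℂ) 1 := by
    rw [mem_ball_zero_iff]; exact hlt
  set lamc := (starRingEnd ℂ) lam with hlamc
  have hmemc : lamc ∈ Metric.ball (0:ℂ) 1 := by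
    rw [mem_ball_zero_iff, hlamc]
    simpa [Complex.norm_conj] using hlt
  have hlamne : lamc ≠ lam := by
    rw [hlamc]
    intro h
    exact hnonreal ((Complex.conj_eq_iff_im).1 h)
  have hFlam : F lam = 0 := hzero
  have hFderiv : HasDerivAt F 0 lam := by
    have h1 := (hFdiff.differentiableAt (Metric.isOpen_ball.mem_nhds hmem)).hasDerivAt
    rwa [hdzero] at h1
  have hFconj : ∀ z, F ((starRingEnd ℂ) z) = (starRingEnd ℂ) (F z) := by
    intro z
    simp only [hF, starRingEnd_apply]
    rw [star_add, star_one, tsum_star]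
    refine congrArg _ (tsum_congr fun n => ?_)
    simp [star_mul', star_pow, Complex.star_def, Complex.conj_ofReal, mul_comm]
  have hFclam : F lamc = 0 := by rw [hlamc, hFconj, hFlam, map_zero]
  have hFderivc : HasDerivAt F 0 lamc := by
    have := my_hasDerivAt_conj hFconj hFderiv
    simpa [hlamc] using this
  -- the quotient function g
  set g : ℂ → ℂ := dslope (dslope (dslope (dslope F lam) lam) lamc) lamc with hg
  have hnhds : Metric.ball (0:ℂ) 1 ∈ 𝓝 lam := Metric.isOpen_ball.mem_nhds hmem
  have hnhdsc : Metric.ball (0:ℂ) 1 ∈ 𝓝 lamc := Metric.isOpen_ball.mem_nhds hmemc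
  have hgdiff : DifferentiableOn ℂ g (Metric.ball 0 1) := by
    rw [hg, Complex.differentiableOn_dslope hnhdsc, Complex.differentiableOn_dslope hnhdsc,
      Complex.differentiableOn_dslope hnhds, Complex.differentiableOn_dslope hnhds]
    exact hFdiff
  have hd1_ne : ∀ z, z ≠ lam → dslope F lam z = F z / (z - lam) := by
    intro z hz
    rw [dslope_of_ne _ hz, slope_def_field, hFlam, sub_zero]
  have hd1 : dslope F lam lam = 0 := by rw [dslope_same]; exact hFderiv.deriv
  have hG_ne : ∀ z, z ≠ lam → dslope (dslope F lam) lam z = F z / (z - lam)^2 := by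
    intro z hz
    rw [dslope_of_ne _ hz, slope_def_field, hd1_ne z hz, hd1, sub_zero, div_div, sq]
  have hGlamc : dslope (dslope F lam) lam lamc = 0 := by
    rw [hG_ne lamc hlamne, hFclam, zero_div]
  have hGderiv : deriv (dslope (dslope F lam) lam) lamc = 0 := by
    have hev : dslope (dslope F lam) lam =ᶠ[𝓝 lamc] fun z => F z * ((z - lam)^2)⁻¹ := by
      filter_upwards [eventually_ne_nhds hlamne] with z hz
      rw [hG_ne z hz, div_eq_mul_inv]
    rw [hev.deriv_eq]
    have hne2 : (lamc - lam)^2 ≠ 0 := pow_ne_zero _ (sub_ne_zero.2 hlamne)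
    have hpow : HasDerivAt (fun z : ℂ => (z - lam)^2) (2*(lamc - lam)^1) lamc := by
      simpa using ((hasDerivAt_id lamc).sub_const lam).fun_pow 2
    have hinv := hpow.inv hne2
    have hprod := hFderivc.mul hinv
    rw [hFclam] at hprod
    rw [show (fun z => F z * ((z - lam)^2)⁻¹) = F * (fun z : ℂ => (z - lam)^2)⁻¹ from rfl]
    simpa using hprod.deriv
  have hd3 : dslope (dslope (dslope F lam) lam) lamc lamc = 0 := by
    rw [dslope_same]; exact hGderiv
  have hd3_ne : ∀ z, z ≠ lam → z ≠ lamc →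
      dslope (dslope (dslope F lam) lam) lamc z = F z / ((z - lam)^2 * (z - lamc)) := by
    intro z h1 h2
    rw [dslope_of_ne _ h2, slope_def_field, hG_ne z h1, hGlamc, sub_zero, div_div]
  have hgeq : ∀ z, z ≠ lam → z ≠ lamc → g z = F z / ((z - lam)^2 * (z - lamc)^2) := by
    intro z h1 h2
    rw [hg, dslope_of_ne _ h2, slope_def_field, hd3, hd3_ne z h1 h2, sub_zero, div_div,
      mul_assoc, ← sq]
  clear_value p
  -- the radius ρ
  set ρ : ℝ := Real.sqrt (4/5) with hρ
  have hρsq : ρ^2 = 4/5 := Real.sq_sqrt (by norm_num)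
  have hρpos : 0 < ρ := Real.sqrt_pos.2 (by norm_num)
  have hρlt1 : ρ < 1 := by nlinarith
  -- the target number
  have htarget8 : (2 * (5:ℝ)^(-(5/8) : ℝ))^8 = 256/3125 := by
    rw [mul_pow, ← Real.rpow_natCast ((5:ℝ)^(-(5/8):ℝ)) 8, ← Real.rpow_mul (by norm_num)]
    rw [show (-(5/8):ℝ) * (8:ℕ) = ((-5:ℤ):ℝ) by push_cast; ring, Real.rpow_intCast]
    norm_num
  have htargetpos : 0 < 2 * (5:ℝ)^(-(5/8) : ℝ) := by positivity
  rcases le_or_gt ρ r with hcase | hcase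
  · -- trivial case : r ≥ ρ
    refine le_trans ?_ hcase
    have h2 : (2 * (5:ℝ)^(-(5/8) : ℝ))^2 ≤ ρ^2 := by
      rw [mul_pow, ← Real.rpow_natCast ((5:ℝ)^(-(5/8):ℝ)) 2, ← Real.rpow_mul (by norm_num)]
      rw [hρsq]
      have : (5:ℝ)^((-(5/8):ℝ) * (2:ℕ)) ≤ (5:ℝ)^((-1:ℤ):ℝ) := by
        apply Real.rpow_le_rpow_of_exponent_le (by norm_num)
        push_cast; norm_num
      rw [Real.rpow_intCast] at this
      nlinarith [this]
    nlinarith [htargetpos, hρpos, h2]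
  · -- main case : r < ρ
    -- the function h
    set h : ℂ → ℂ := fun z => g z * ((ρ:ℂ)^2 - lamc * z)^2 * ((ρ:ℂ)^2 - lam * z)^2 with hh
    have hhdiff : DifferentiableOn ℂ h (Metric.ball 0 1) := by
      rw [hh]
      apply DifferentiableOn.mul
      apply DifferentiableOn.mul hgdiff
      · exact (Differentiable.differentiableOn (by fun_prop))
      · exact (Differentiable.differentiableOn (by fun_prop))
    have hdc : DiffContOnCl ℂ h (Metric.ball 0 ρ) := by
      apply DifferentiableOn.diffContOnCl
      rw [closure_ball (0:ℂ) hρpos.ne']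
      exact hhdiff.mono (Metric.closedBall_subset_ball hρlt1)
    have hcauchy := hdc.circleIntegral_sub_inv_smul (Metric.mem_ball_self hρpos)
    clear_value h g F c
    -- value at 0
    have h0lam : (0:ℂ) ≠ lam := fun h' => hlam0 h'.symm
    have h0lamc : (0:ℂ) ≠ lamc := by
      intro h'
      apply hlam0
      have := congrArg (starRingEnd ℂ) h'
      simpa [hlamc] using this.symm
    have hF0 : F 0 = 1 := by
      rw [hF]
      simp
    have habs_lamc : ‖lamc‖ = r := by rw [hlamc, Complex.norm_conj, hr]
    have hh0 : ‖h 0‖ = ρ^8 / r^4 := by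
      have hg0 : g 0 = 1 / ((0 - lam)^2 * (0 - lamc)^2) := by
        rw [hgeq 0 h0lam h0lamc, hF0]
      have e0 : h 0 = 1 / (lam^2 * lamc^2) * ((ρ:ℂ)^2)^2 * ((ρ:ℂ)^2)^2 := by
        rw [hh]
        simp only [mul_zero, sub_zero]
        rw [hg0]
        ring_nf
      rw [e0]
      simp only [norm_mul, norm_div, norm_one, norm_pow, habs_lamc, Complex.norm_real,
        Real.norm_eq_abs, abs_of_pos hρpos]
      rw [← hr]
      field_simp
    -- norm of the Cauchy integral RHS
    have hRHSnorm : ‖(2*(Real.pi:ℂ)*Complex.I) • h 0‖ = 2*Real.pi*(ρ^8/r^4) := by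
      rw [norm_smul, hh0]
      have : ‖2*(Real.pi:ℂ)*Complex.I‖ = 2*Real.pi := by
        simp [_root_.abs_of_nonneg Real.pi_nonneg]
      rw [this]
    have hcmlt : ∀ θ:ℝ, ‖circleMap 0 ρ θ‖ < 1 := by
      intro θ
      rw [norm_circleMap_zero, abs_of_pos hρpos]
      exact hρlt1
    have hcm_mem : ∀ θ:ℝ, circleMap 0 ρ θ ∈ Metric.ball (0:ℂ) 1 :=
      fun θ => mem_ball_zero_iff.2 (hcmlt θ)
    have hFcont : Continuous fun θ:ℝ => F (circleMap 0 ρ θ) :=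
      hFdiff.continuousOn.comp_continuous (continuous_circleMap 0 ρ) hcm_mem
    have hhcont : Continuous fun θ:ℝ => h (circleMap 0 ρ θ) :=
      hhdiff.continuousOn.comp_continuous (continuous_circleMap 0 ρ) hcm_mem
    have hIneq1 : ‖∮ z in C(0, ρ), (z - 0)⁻¹ • h z‖
        ≤ ∫ θ in (0:ℝ)..2*Real.pi, ‖h (circleMap 0 ρ θ)‖ := by
      rw [circleIntegral]
      refine (intervalIntegral.norm_integral_le_integral_norm (by positivity)).trans
        (le_of_eq ?_)
      apply intervalIntegral.integral_congr
      intro θ _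
      simp only [deriv_circleMap, norm_smul, norm_mul, norm_inv,
        norm_circleMap_zero, _root_.abs_of_pos hρpos, Complex.norm_I, mul_one, sub_zero]
      field_simp
    have hcircnorm : ∀ θ:ℝ, ‖h (circleMap 0 ρ θ)‖ = ρ^4 * ‖F (circleMap 0 ρ θ)‖ := by
      intro θ
      set z := circleMap 0 ρ θ with hzdef
      have hzabs : ‖z‖ = ρ := by rw [hzdef, norm_circleMap_zero, abs_of_pos hρpos]
      have hzlam : z ≠ lam := by
        intro he; rw [he, ← hr] at hzabs; exact absurd hzabs (ne_of_lt hcase)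
      have hzlamc : z ≠ lamc := by
        intro he; rw [he, habs_lamc] at hzabs; exact absurd hzabs (ne_of_lt hcase)
      have hzz : (ρ:ℂ)^2 = z * (starRingEnd ℂ) z := by
        rw [Complex.mul_conj, Complex.normSq_eq_norm_sq, hzabs]
        push_cast; ring
      have e1 : (ρ:ℂ)^2 - lamc * z = (starRingEnd ℂ) (z - lam) * z := by
        rw [hzz, map_sub, hlamc]; ring
      have e2 : (ρ:ℂ)^2 - lam * z = (starRingEnd ℂ) (z - lamc) * z := by
        rw [hzz, map_sub, hlamc, Complex.conj_conj]; ring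
      have hA : ‖z - lam‖ ≠ 0 := by simp [sub_eq_zero, hzlam]
      have hB : ‖z - lamc‖ ≠ 0 := by simp [sub_eq_zero, hzlamc]
      simp only [hh]
      rw [hgeq z hzlam hzlamc, e1, e2]
      rw [norm_mul, norm_mul, norm_div, norm_mul,
        norm_pow, norm_pow, norm_pow, norm_pow, norm_mul, norm_mul, Complex.norm_conj,
        Complex.norm_conj, hzabs]
      field_simp
    have hIeq : ∫ θ in (0:ℝ)..2*Real.pi, ‖h (circleMap 0 ρ θ)‖
        = ρ^4 * ∫ θ in (0:ℝ)..2*Real.pi, ‖F (circleMap 0 ρ θ)‖ := by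
      rw [← intervalIntegral.integral_const_mul]
      apply intervalIntegral.integral_congr
      intro θ _
      exact hcircnorm θ
    -- Parseval bound
    have hpars : ∫ θ in (0:ℝ)..2*Real.pi, ‖F (circleMap 0 ρ θ)‖^2 ≤ 2*Real.pi*5 := by
      have hp5 := my_parseval hcnorm hρpos hρlt1
      rw [show ((1:ℝ) - ρ^2)⁻¹ = 5 by rw [hρsq]; norm_num] at hp5
      refine le_trans (le_of_eq ?_) hp5
      apply intervalIntegral.integral_congr
      intro θ _
      show ‖F (circleMap 0 ρ θ)‖^2 = ‖∑' n, c n * (circleMap 0 ρ θ)^n‖^2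
      rw [hFeq _ (hcmlt θ)]
    -- AM-GM integral bound
    have hs5 : Real.sqrt 5 ^ 2 = 5 := Real.sq_sqrt (by norm_num)
    have hs5pos : 0 < Real.sqrt 5 := Real.sqrt_pos.2 (by norm_num)
    have hFint1 : IntervalIntegrable (fun θ => ‖F (circleMap 0 ρ θ)‖) volume 0 (2*Real.pi) :=
      (hFcont.norm).intervalIntegrable _ _
    have hFint2 : IntervalIntegrable
        (fun θ => (5 + ‖F (circleMap 0 ρ θ)‖^2)/(2*Real.sqrt 5)) volume 0 (2*Real.pi) :=
      ((continuous_const.add (hFcont.norm.pow 2)).div_const _).intervalIntegrable _ _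
    have hAMGM : ∫ θ in (0:ℝ)..2*Real.pi, ‖F (circleMap 0 ρ θ)‖ ≤ 2*Real.pi*Real.sqrt 5 := by
      have hstep : ∫ θ in (0:ℝ)..2*Real.pi, ‖F (circleMap 0 ρ θ)‖
          ≤ ∫ θ in (0:ℝ)..2*Real.pi, (5 + ‖F (circleMap 0 ρ θ)‖^2)/(2*Real.sqrt 5) := by
        apply intervalIntegral.integral_mono_on (by positivity) hFint1 hFint2
        intro θ _
        rw [le_div_iff₀ (by positivity)]
        nlinarith [sq_nonneg (‖F (circleMap 0 ρ θ)‖ - Real.sqrt 5), hs5, hs5pos,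
          norm_nonneg (F (circleMap 0 ρ θ))]
      refine hstep.trans ?_
      rw [intervalIntegral.integral_div,
        intervalIntegral.integral_add (g := fun θ => ‖F (circleMap 0 ρ θ)‖^2) intervalIntegrable_const
          ((hFcont.norm.pow 2).intervalIntegrable _ _),
        intervalIntegral.integral_const, smul_eq_mul]
      rw [div_le_iff₀ (by positivity)]
      nlinarith [hpars, hs5, Real.pi_pos]
    -- combine
    have hmain : 2*Real.pi*(ρ^8/r^4) ≤ ρ^4 * (2*Real.pi*Real.sqrt 5) := by
      calc 2*Real.pi*(ρ^8/r^4) = ‖(2*(Real.pi:ℂ)*Complex.I) • h 0‖ := hRHSnorm.symm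
        _ = ‖∮ z in C(0, ρ), (z - 0)⁻¹ • h z‖ := by rw [hcauchy]
        _ ≤ ∫ θ in (0:ℝ)..2*Real.pi, ‖h (circleMap 0 ρ θ)‖ := hIneq1
        _ = ρ^4 * ∫ θ in (0:ℝ)..2*Real.pi, ‖F (circleMap 0 ρ θ)‖ := hIeq
        _ ≤ ρ^4 * (2*Real.pi*Real.sqrt 5) :=
            mul_le_mul_of_nonneg_left hAMGM (by positivity)
    have hρ4 : ρ^4 = 16/25 := by nlinarith [hρsq]
    have hρ8 : ρ^8 = 256/625 := by nlinarith [hρsq, hρ4]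
    have h1 : ρ^8/r^4 ≤ ρ^4 * Real.sqrt 5 := by
      nlinarith [hmain, Real.pi_pos]
    have hr4 : 16/(25*Real.sqrt 5) ≤ r^4 := by
      rw [div_le_iff₀ (by positivity)] at h1 ⊢
      nlinarith [h1, hρ4, hρ8, hs5pos, hrpos, pow_pos hrpos 4]
    have hr8 : 256/3125 ≤ r^8 := by
      calc (256:ℝ)/3125 = (16/(25*Real.sqrt 5))^2 := by
            rw [div_pow, mul_pow, hs5]; norm_num
        _ ≤ (r^4)^2 := by
            apply pow_le_pow_left₀ (by positivity) hr4
        _ = r^8 := by ring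
    have h8 : (2 * (5:ℝ)^(-(5/8) : ℝ))^8 ≤ r^8 := by rw [htarget8]; exact hr8
    exact le_of_pow_le_pow_left₀ (by norm_num) hrpos.le h8

end MainDoubleZero
end
end

section
/- For every λ ∈ H = {λ ∈ ℂ : 1/3 ≤ |λ|² ≤ 1/2, 0 ≤ Re(λ) ≤ (3|λ|² − 1)/2}, there exist real numbers a ≥ 1 and b ≥ 1/2 such that the rectangle R_{a,b} satisfies R_{a,b} ⊆ λR_{a,b} ∪ (λR_{a,b} − 1) ∪ (λR_{a,b} + 1). -/
open MeasureTheory Set Pointwise ENNReal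

noncomputable section

/-- The closed rectangle centered at the origin with vertices ±a ± ib. -/
def Rect (a b : ℝ) : Set ℂ := {z | |z.re| ≤ a ∧ |z.im| ≤ b}

/-- Key one-sided step: if a point violates the rectangle condition on the
right, shifting by `-1` lands in the (normalized) rotated rectangle. -/
private lemma keyRight (u v ρ x y : ℝ) (hu : 0 ≤ u) (hv : 0 < v)
    (hρ : ρ = u^2 + v^2) (h13 : 1 ≤ 3*ρ) (hH : 2*u + 1 ≤ 3*ρ)
    (hx1 : 2*ρ*x ≤ 3*ρ - u) (_hx2 : -(3*ρ - u) ≤ 2*ρ*x)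
    (hy1 : 2*ρ*y ≤ v) (hy2 : -v ≤ 2*ρ*y)
    (hV : 3*ρ - u < 2*(x*u + y*v) ∨ v < 2*(x*v - y*u)) :
    |2*((x-1)*u + y*v)| ≤ 3*ρ - u ∧ |2*(y*u - (x-1)*v)| ≤ v := by
  have hρ0 : 0 < ρ := by nlinarith
  constructor
  · rw [abs_le]
    constructor
    · -- R2
      rcases hV with hV1 | hV2
      · linarith
      · by_contra hc
        push_neg at hc
        nlinarith [mul_nonneg hu (by linarith : (0:ℝ) ≤ 2*(x*v - y*u) - v),
          mul_pos hv (by linarith : (0:ℝ) < -(3*ρ - u) - 2*((x-1)*u + y*v)),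
          mul_nonneg hv.le (by linarith : (0:ℝ) ≤ 3*ρ - 1 - 2*u)]
    · -- R1 (unconditional)
      by_contra hc
      push_neg at hc
      nlinarith [mul_nonneg hu (by linarith : (0:ℝ) ≤ 3*ρ - u - 2*ρ*x),
        mul_nonneg hv.le (by linarith : (0:ℝ) ≤ v - 2*ρ*y),
        mul_nonneg hρ0.le (by linarith : (0:ℝ) ≤ 3*ρ - 1 - 2*u),
        mul_pos hρ0 (by linarith : (0:ℝ) < 2*((x-1)*u + y*v) - (3*ρ - u)),
        sq_nonneg u]
  · rw [abs_le]
    constructor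
    · -- R4 (unconditional)
      by_contra hc
      push_neg at hc
      nlinarith [mul_nonneg hu (by linarith : (0:ℝ) ≤ 2*ρ*y + v),
        mul_nonneg hv.le (by linarith : (0:ℝ) ≤ 3*ρ - u - 2*ρ*x),
        mul_pos hρ0 (by linarith : (0:ℝ) < -v - 2*(y*u - (x-1)*v))]
    · -- R3
      rcases hV with hV1 | hV2
      · by_contra hc
        push_neg at hc
        nlinarith [mul_nonneg hu (by linarith : (0:ℝ) ≤ 2*(y*u - (x-1)*v) - v),
          mul_pos hv (by linarith : (0:ℝ) < 2*(x*u + y*v) - (3*ρ - u)),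
          mul_nonneg hv.le (by linarith : (0:ℝ) ≤ 3*ρ - 1 - 2*u)]
      · linarith

/-- Key covering step, normalized form: any point of the rectangle can be
shifted by some `s ∈ {-1,0,1}` into the rotated rectangle. -/
private lemma key (u v ρ x y : ℝ) (hu : 0 ≤ u) (hv : 0 < v)
    (hρ : ρ = u^2 + v^2) (h13 : 1 ≤ 3*ρ) (hH : 2*u + 1 ≤ 3*ρ)
    (hx1 : 2*ρ*x ≤ 3*ρ - u) (hx2 : -(3*ρ - u) ≤ 2*ρ*x)
    (hy1 : 2*ρ*y ≤ v) (hy2 : -v ≤ 2*ρ*y) :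
    ∃ s : ℝ, (s = -1 ∨ s = 0 ∨ s = 1) ∧
      |2*((x+s)*u + y*v)| ≤ 3*ρ - u ∧ |2*(y*u - (x+s)*v)| ≤ v := by
  have hxm1 : x + (-1 : ℝ) = x - 1 := by ring
  rcases le_or_gt (2*(x*u + y*v)) (3*ρ - u) with hA1 | hA1
  · rcases le_or_gt (-(3*ρ - u)) (2*(x*u + y*v)) with hA2 | hA2
    · rcases le_or_gt (2*(y*u - x*v)) v with hB1 | hB1
      · rcases le_or_gt (-v) (2*(y*u - x*v)) with hB2 | hB2
        · -- no violation: s = 0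
          refine ⟨0, Or.inr (Or.inl rfl), ?_, ?_⟩
          · rw [abs_le]; constructor <;> [linarith; linarith]
          · rw [abs_le]; constructor <;> [linarith; linarith]
        · -- right violation V2: s = -1
          have h := keyRight u v ρ x y hu hv hρ h13 hH hx1 hx2 hy1 hy2
            (Or.inr (by linarith))
          exact ⟨-1, Or.inl rfl, by rw [hxm1]; exact h.1, by rw [hxm1]; exact h.2⟩
      · -- left violation V2: s = 1
        have h := keyRight u v ρ (-x) (-y) hu hv hρ h13 hH
          (by linarith) (by linarith) (by linarith) (by linarith)
          (Or.inr (by linarith))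
        refine ⟨1, Or.inr (Or.inr rfl), ?_, ?_⟩
        · rw [show 2*((x+(1:ℝ))*u + y*v) = -(2*((-x-1)*u + (-y)*v)) by ring, abs_neg]
          exact h.1
        · rw [show 2*(y*u - (x+(1:ℝ))*v) = -(2*((-y)*u - (-x-1)*v)) by ring, abs_neg]
          exact h.2
    · -- left violation V1: s = 1
      have h := keyRight u v ρ (-x) (-y) hu hv hρ h13 hH
        (by linarith) (by linarith) (by linarith) (by linarith)
        (Or.inl (by linarith))
      refine ⟨1, Or.inr (Or.inr rfl), ?_, ?_⟩
      · rw [show 2*((x+(1:ℝ))*u + y*v) = -(2*((-x-1)*u + (-y)*v)) by ring, abs_neg]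
        exact h.1
      · rw [show 2*(y*u - (x+(1:ℝ))*v) = -(2*((-y)*u - (-x-1)*v)) by ring, abs_neg]
        exact h.2
  · -- right violation V1: s = -1
    have h := keyRight u v ρ x y hu hv hρ h13 hH hx1 hx2 hy1 hy2
      (Or.inl (by linarith))
    exact ⟨-1, Or.inl rfl, by rw [hxm1]; exact h.1, by rw [hxm1]; exact h.2⟩

/-- For every λ ∈ H there are a ≥ 1, b ≥ 1/2 with
R_{a,b} ⊆ λR_{a,b} ∪ (λR_{a,b}−1) ∪ (λR_{a,b}+1). -/
theorem rectangle_covering_of_mem_H (lam : ℂ) (hlam : lam ∈ Hset) :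
    ∃ a b : ℝ, 1 ≤ a ∧ 1 / 2 ≤ b ∧
      Rect a b ⊆ (fun z => lam * z) '' Rect a b ∪
        (fun z => lam * z - 1) '' Rect a b ∪
        (fun z => lam * z + 1) '' Rect a b := by
  obtain ⟨h1, h2, h3, h4⟩ := hlam
  set ρ : ℝ := (‖lam‖)^2 with hρ_def
  set u : ℝ := lam.re with hu_def
  have hρ : ρ = u^2 + lam.im^2 := by
    rw [hρ_def, Complex.sq_norm, Complex.normSq_apply]; ring
  have hρ0 : 0 < ρ := by linarith
  -- Im lam ≠ 0
  have hv0 : lam.im ≠ 0 := by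
    intro h0
    rw [h0] at hρ
    simp at hρ
    nlinarith [h1, h2, h3, h4, sq_nonneg u]
  set v : ℝ := |lam.im| with hv_def
  have hv : 0 < v := abs_pos.mpr hv0
  have hv2 : v^2 = lam.im^2 := sq_abs _
  have hρ' : ρ = u^2 + v^2 := by rw [hv2]; exact hρ
  have h13 : 1 ≤ 3*ρ := by linarith
  have hH : 2*u + 1 ≤ 3*ρ := by linarith
  have h2ρ : (0:ℝ) < 2*ρ := by linarith
  refine ⟨(3*ρ - u)/(2*ρ), v/(2*ρ), ?_, ?_, ?_⟩
  · rw [le_div_iff₀ h2ρ]; linarith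
  · rw [le_div_iff₀ h2ρ]
    -- need ρ ≤ v
    have hρv : ρ ≤ v := by
      nlinarith [mul_nonneg (by linarith : (0:ℝ) ≤ (3*ρ-1)/2 - u)
          (by linarith : (0:ℝ) ≤ (3*ρ-1)/2 + u),
        mul_nonneg (by linarith : (0:ℝ) ≤ ρ - 1/3) (by linarith : (0:ℝ) ≤ 1/2 - ρ),
        hv.le, hρ0.le, sq_nonneg (v - ρ), sq_nonneg (v + ρ)]
    linarith
  · intro z hz
    obtain ⟨hzre, hzim⟩ := hz
    set ε : ℝ := if 0 ≤ lam.im then 1 else -1 with hε_def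
    have hεv : v = ε * lam.im := by
      rw [hv_def, hε_def]
      rcases le_or_gt 0 lam.im with h | h
      · rw [if_pos h, abs_of_nonneg h, one_mul]
      · rw [if_neg (not_le.mpr h), abs_of_neg h]; ring
    have hε2 : ε * ε = 1 := by
      rw [hε_def]; rcases le_or_gt 0 lam.im with h | h
      · rw [if_pos h]; norm_num
      · rw [if_neg (not_le.mpr h)]; norm_num
    have hεabs : |ε| = 1 := by
      rw [hε_def]; rcases le_or_gt 0 lam.im with h | h
      · rw [if_pos h]; norm_num
      · rw [if_neg (not_le.mpr h)]; norm_num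
    set x : ℝ := z.re with hx_def
    set y : ℝ := ε * z.im with hy_def
    have hyabs : |y| = |z.im| := by rw [hy_def, abs_mul, hεabs, one_mul]
    -- bounds for key
    have hxb : |x| ≤ (3*ρ - u)/(2*ρ) := hzre
    have hyb : |y| ≤ v/(2*ρ) := by rw [hyabs]; exact hzim
    rw [abs_le] at hxb hyb
    have hx1 : 2*ρ*x ≤ 3*ρ - u := by
      have := (le_div_iff₀ h2ρ).mp hxb.2; linarith
    have hx2 : -(3*ρ - u) ≤ 2*ρ*x := by
      have := (le_div_iff₀ h2ρ).mp (neg_le.mp hxb.1); linarith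
    have hy1 : 2*ρ*y ≤ v := by
      have := (le_div_iff₀ h2ρ).mp hyb.2; linarith
    have hy2 : -v ≤ 2*ρ*y := by
      have := (le_div_iff₀ h2ρ).mp (neg_le.mp hyb.1); linarith
    obtain ⟨s, hs, hA, hB⟩ := key u v ρ x y h3 hv hρ' h13 hH hx1 hx2 hy1 hy2
    -- translate back to complex data
    have hnsq : Complex.normSq lam = ρ := by rw [hρ_def, Complex.sq_norm]
    have hlam0 : lam ≠ 0 := by
      intro h; rw [h] at hv0; exact hv0 rfl
    set w : ℂ := (z + (s:ℂ))/lam with hw_def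
    have hwre : w.re = ((x + s)*u + z.im*lam.im)/ρ := by
      rw [hw_def, Complex.div_re, hnsq]
      simp only [Complex.add_re, Complex.add_im, Complex.ofReal_re, Complex.ofReal_im]
      field_simp
      rw [hx_def, hu_def]; ring
    have hwim : w.im = (z.im*u - (x + s)*lam.im)/ρ := by
      rw [hw_def, Complex.div_im, hnsq]
      simp only [Complex.add_re, Complex.add_im, Complex.ofReal_re, Complex.ofReal_im]
      field_simp
      rw [hx_def, hu_def]; ring
    have hyv : y * v = z.im * lam.im := by
      rw [hy_def, hεv, show ε*z.im*(ε*lam.im) = ε*ε*(z.im*lam.im) by ring, hε2, one_mul]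
    have hwmem : w ∈ Rect ((3*ρ - u)/(2*ρ)) (v/(2*ρ)) := by
      constructor
      · rw [hwre, abs_div, abs_of_pos hρ0, div_le_div_iff₀ hρ0 h2ρ]
        have : |(x + s)*u + z.im*lam.im| * 2 ≤ 3*ρ - u := by
          rw [← hyv]
          calc |(x + s)*u + y*v| * 2 = |2*((x+s)*u + y*v)| := by
                rw [abs_mul, abs_two]; ring
            _ ≤ 3*ρ - u := hA
        calc |(x + s)*u + z.im*lam.im| * (2*ρ)
            = (|(x + s)*u + z.im*lam.im| * 2) * ρ := by ring
          _ ≤ (3*ρ - u) * ρ := mul_le_mul_of_nonneg_right this hρ0.le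
      · rw [hwim, abs_div, abs_of_pos hρ0, div_le_div_iff₀ hρ0 h2ρ]
        have heq : |z.im*u - (x + s)*lam.im| = |y*u - (x+s)*v| := by
          rw [hy_def, hεv, show ε*z.im*u - (x+s)*(ε*lam.im) = ε*(z.im*u - (x+s)*lam.im) by ring,
            abs_mul, hεabs, one_mul]
        rw [heq]
        have : |y*u - (x+s)*v| * 2 ≤ v := by
          calc |y*u - (x+s)*v| * 2 = |2*(y*u - (x+s)*v)| := by
                rw [abs_mul, abs_two]; ring
            _ ≤ v := hB
        calc |y*u - (x+s)*v| * (2*ρ) = (|y*u - (x+s)*v| * 2) * ρ := by ring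
          _ ≤ v * ρ := mul_le_mul_of_nonneg_right this hρ0.le
    have hmul : lam * w = z + (s:ℂ) := by
      rw [hw_def, mul_div_cancel₀ _ hlam0]
    rcases hs with hs | hs | hs
    · -- s = -1 : use third map lam*z + 1
      right
      refine ⟨w, hwmem, ?_⟩
      simp only
      rw [hmul, hs]
      push_cast
      ring
    · -- s = 0 : first map
      left; left
      refine ⟨w, hwmem, ?_⟩
      simp only
      rw [hmul, hs]
      push_cast
      ring
    · -- s = 1 : second map lam*z - 1
      left; right
      refine ⟨w, hwmem, ?_⟩
      simp only
      rw [hmul, hs]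
      push_cast
      ring
end
end

section
/- ℳ equals the closure of ℳ₀ intersected with the open unit disk: ℳ = clos(ℳ₀) ∩ 𝔻. -/
open MeasureTheory Set Pointwise ENNReal

noncomputable section

open Filter Topology


def MCoef : Set (ℕ → ℤ) := {a | ∀ k, a k = -1 ∨ a k = 0 ∨ a k = 1}

def MPoly (a : ℕ → ℤ) (n : ℕ) (z : ℂ) : ℂ :=
  1 + ∑ k ∈ Finset.range n, (a k : ℂ) * z ^ (k + 1)

def MFun (a : ℕ → ℤ) (z : ℂ) : ℂ := 1 + ∑' k : ℕ, (a k : ℂ) * z ^ (k + 1)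

lemma mcoef_norm {a : ℕ → ℤ} (ha : a ∈ MCoef) (k : ℕ) : ‖(a k : ℂ)‖ ≤ 1 := by
  rcases ha k with h | h | h <;> rw [h] <;> norm_num

lemma term_norm_le {a : ℕ → ℤ} (ha : a ∈ MCoef) {z : ℂ} {r : ℝ} (hz : ‖z‖ ≤ r) (k : ℕ) :
    ‖(a k : ℂ) * z ^ (k + 1)‖ ≤ r ^ (k + 1) := by
  have h0 : (0:ℝ) ≤ ‖z‖ := norm_nonneg _
  calc ‖(a k : ℂ) * z ^ (k + 1)‖ = ‖(a k : ℂ)‖ * ‖z‖ ^ (k+1) := by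
        rw [norm_mul, norm_pow]
    _ ≤ 1 * r ^ (k+1) := by
        exact mul_le_mul (mcoef_norm ha k) (pow_le_pow_left₀ h0 hz _) (by positivity) zero_le_one
    _ = r ^ (k+1) := one_mul _

lemma msummable {a : ℕ → ℤ} (ha : a ∈ MCoef) {z : ℂ} (hz : ‖z‖ < 1) :
    Summable (fun k : ℕ => (a k : ℂ) * z ^ (k + 1)) := by
  apply Summable.of_norm_bounded _ (term_norm_le ha le_rfl)
  exact (summable_geometric_of_lt_one (norm_nonneg z) hz).comp_injective (add_left_injective 1)

lemma tail_bound {a : ℕ → ℤ} (ha : a ∈ MCoef) {r : ℝ} (hr : r < 1) {z : ℂ} (hz : ‖z‖ ≤ r)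
    (n : ℕ) : ‖MFun a z - MPoly a n z‖ ≤ r ^ (n + 1) / (1 - r) := by
  have h0 : (0:ℝ) ≤ r := le_trans (norm_nonneg z) hz
  have hz1 : ‖z‖ < 1 := lt_of_le_of_lt hz hr
  have hs := msummable ha hz1
  have hkey : MFun a z - MPoly a n z = ∑' k : ℕ, (a (k + n) : ℂ) * z ^ ((k + n) + 1) := by
    have := hs.sum_add_tsum_nat_add n
    simp only [MFun, MPoly]
    rw [← this]; ring
  rw [hkey]
  have hsum2 : Summable (fun k : ℕ => r ^ ((k + n) + 1)) := by
    apply (summable_geometric_of_lt_one h0 hr).comp_injective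
    intro x y h; simpa using h
  calc ‖∑' k : ℕ, (a (k + n) : ℂ) * z ^ ((k + n) + 1)‖
      ≤ ∑' k : ℕ, r ^ ((k + n) + 1) := by
        apply tsum_of_norm_bounded hsum2.hasSum
        intro k; exact term_norm_le ha hz _
    _ = r ^ (n + 1) / (1 - r) := by
        have : ∀ k : ℕ, r ^ ((k + n) + 1) = r ^ (n+1) * r ^ k := by
          intro k; rw [← pow_add]; ring_nf
        rw [tsum_congr this, tsum_mul_left, tsum_geometric_of_lt_one h0 hr, div_eq_mul_inv]

lemma mfun_zero (a : ℕ → ℤ) : MFun a 0 = 1 := by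
  have : ∀ k : ℕ, (a k : ℂ) * (0:ℂ) ^ (k + 1) = 0 := by
    intro k; simp [pow_succ]
  simp [MFun, tsum_congr this]

lemma mfun_sub_le {a : ℕ → ℤ} (ha : a ∈ MCoef) {z w : ℂ} (hz : ‖z‖ < 1) (hw : ‖w‖ < 1) :
    ‖MFun a z - MFun a w‖ ≤ ∑' k : ℕ, ‖z ^ (k+1) - w ^ (k+1)‖ := by
  have hsz := msummable ha hz
  have hsw := msummable ha hw
  have hdiff : Summable (fun k : ℕ => ‖z ^ (k+1) - w ^ (k+1)‖) := by
    apply Summable.of_nonneg_of_le (fun k => norm_nonneg _)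
      (fun k => (norm_sub_le _ _).trans (by rw [norm_pow, norm_pow]))
    exact ((summable_geometric_of_lt_one (norm_nonneg z) hz).comp_injective
      (add_left_injective 1)).add
      ((summable_geometric_of_lt_one (norm_nonneg w) hw).comp_injective (add_left_injective 1))
  have hkey : MFun a z - MFun a w = ∑' k : ℕ, (a k : ℂ) * (z ^ (k+1) - w ^ (k+1)) := by
    simp only [MFun]
    rw [add_sub_add_left_eq_sub, ← Summable.tsum_sub hsz hsw]
    congr 1; funext k; ring
  rw [hkey]
  apply tsum_of_norm_bounded hdiff.hasSum
  intro k
  rw [norm_mul]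
  calc ‖(a k : ℂ)‖ * ‖z ^ (k+1) - w ^ (k+1)‖ ≤ 1 * ‖z ^ (k+1) - w ^ (k+1)‖ :=
        mul_le_mul_of_nonneg_right (mcoef_norm ha k) (norm_nonneg _)
    _ = _ := one_mul _

lemma mpoly_differentiable (a : ℕ → ℤ) (n : ℕ) : Differentiable ℂ (MPoly a n) := by
  apply (differentiable_const (1:ℂ)).fun_add
  apply Differentiable.fun_sum
  intro k _
  exact (differentiable_const _).mul (differentiable_pow _)

lemma mfun_differentiableOn {a : ℕ → ℤ} (ha : a ∈ MCoef) :
    DifferentiableOn ℂ (MFun a) (Metric.ball (0:ℂ) 1) := by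
  apply TendstoLocallyUniformlyOn.differentiableOn (φ := atTop)
    (F := fun n => MPoly a n) ?_ (Filter.Eventually.of_forall fun n =>
      (mpoly_differentiable a n).differentiableOn) Metric.isOpen_ball
  rw [tendstoLocallyUniformlyOn_iff_forall_isCompact Metric.isOpen_ball]
  intro K hK hKc
  rcases K.eq_empty_or_nonempty with rfl | hne
  · simp [TendstoUniformlyOn]
  obtain ⟨z₀, hz₀K, hz₀⟩ := hKc.exists_isMaxOn hne continuous_norm.continuousOn
  set r : ℝ := ‖z₀‖ with hr
  have hr1 : r < 1 := by simpa [Complex.dist_eq] using hK hz₀K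
  have hr0 : 0 ≤ r := norm_nonneg _
  rw [Metric.tendstoUniformlyOn_iff]
  intro ε hε
  have htend : Tendsto (fun n : ℕ => r ^ (n+1) / (1 - r)) atTop (𝓝 0) := by
    have h1 : Tendsto (fun n : ℕ => r ^ (n+1)) atTop (𝓝 0) :=
      (tendsto_pow_atTop_nhds_zero_of_lt_one hr0 hr1).comp (tendsto_add_atTop_nat 1)
    simpa using h1.div_const (1 - r)
  filter_upwards [htend.eventually (gt_mem_nhds hε)] with n hn z hzK
  have : ‖MFun a z - MPoly a n z‖ ≤ r ^ (n+1) / (1 - r) := tail_bound ha hr1 (hz₀ hzK) n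
  rw [dist_eq_norm]
  exact lt_of_le_of_lt this hn

lemma mset_subset_closure : MSet ⊆ closure MSet0 := by
  rintro lam ⟨hlt, a, ha, hsum⟩
  have ha' : a ∈ MCoef := ha
  have hlam : ‖lam‖ < 1 := hlt
  have hF : MFun a lam = 0 := by
    simp only [MFun]; rw [hsum.tsum_eq]; ring
  have hdiff := mfun_differentiableOn ha'
  have hanal : AnalyticOnNhd ℂ (MFun a) (Metric.ball (0:ℂ) 1) :=
    hdiff.analyticOnNhd Metric.isOpen_ball
  have hlam_ball : lam ∈ Metric.ball (0:ℂ) 1 := by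
    simpa [Metric.mem_ball, Complex.dist_eq] using hlam
  have hne : ∀ᶠ z in 𝓝[≠] lam, MFun a z ≠ 0 := by
    by_contra h
    rw [Filter.not_eventually] at h
    have heq := hanal.eqOn_zero_of_preconnected_of_frequently_eq_zero
      (convex_ball (0:ℂ) 1).isPreconnected hlam_ball (by simpa using h)
    have h0 : MFun a 0 = 0 := heq (by simp)
    rw [mfun_zero] at h0; exact one_ne_zero h0
  rw [Metric.mem_closure_iff]
  intro ε hε
  rw [eventually_nhdsWithin_iff, Metric.eventually_nhds_iff] at hne
  obtain ⟨δ, hδ, hδ'⟩ := hne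
  set ρ : ℝ := min (δ/2) (min (ε/2) ((1 - ‖lam‖)/2)) with hρdef
  have hρ : 0 < ρ := by
    apply lt_min (by linarith) (lt_min (by linarith) (by linarith))
  have hρδ : ρ < δ := lt_of_le_of_lt (min_le_left _ _) (by linarith)
  have hρε : ρ ≤ ε/2 := le_trans (min_le_right _ _) (min_le_left _ _)
  have hρ1 : ρ ≤ (1 - ‖lam‖)/2 := le_trans (min_le_right _ _) (min_le_right _ _)
  have hsub : Metric.closedBall lam ρ ⊆ Metric.ball (0:ℂ) 1 := by
    intro z hz
    rw [Metric.mem_closedBall] at hz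
    rw [Metric.mem_ball, Complex.dist_eq, sub_zero]
    calc ‖z‖ = ‖lam + (z - lam)‖ := by ring_nf
      _ ≤ ‖lam‖ + ‖z - lam‖ := norm_add_le _ _
      _ ≤ ‖lam‖ + ρ := by
          have : ‖z - lam‖ ≤ ρ := by rwa [dist_eq_norm] at hz
          linarith
      _ < 1 := by linarith
  -- minimum of ‖MFun a‖ on the sphere
  have hsphere_sub : Metric.sphere lam ρ ⊆ Metric.ball (0:ℂ) 1 :=
    le_trans Metric.sphere_subset_closedBall hsub
  have hsne : (Metric.sphere lam ρ).Nonempty := NormedSpace.sphere_nonempty.mpr hρ.le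
  obtain ⟨z₀, hz₀s, hz₀min⟩ := (isCompact_sphere lam ρ).exists_isMinOn hsne
    ((continuous_norm.comp_continuousOn (hdiff.continuousOn.mono hsphere_sub)))
  set m : ℝ := ‖MFun a z₀‖ with hm_def
  have hz₀d : dist z₀ lam = ρ := Metric.mem_sphere.mp hz₀s
  have hm : 0 < m := by
    rw [hm_def, norm_pos_iff]
    apply hδ' (by rw [hz₀d]; exact hρδ)
    simp only [Set.mem_compl_iff, Set.mem_singleton_iff]
    intro hzeq
    rw [hzeq, dist_self] at hz₀d
    exact hρ.ne hz₀d
  set r : ℝ := ‖lam‖ + ρ with hr_def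
  have hr1 : r < 1 := by rw [hr_def]; linarith
  have hzr : ∀ z ∈ Metric.closedBall lam ρ, ‖z‖ ≤ r := by
    intro z hz
    rw [Metric.mem_closedBall, dist_eq_norm] at hz
    calc ‖z‖ = ‖lam + (z - lam)‖ := by ring_nf
      _ ≤ ‖lam‖ + ‖z - lam‖ := norm_add_le _ _
      _ ≤ r := by rw [hr_def]; linarith
  have htend : Tendsto (fun n : ℕ => r ^ (n+1) / (1 - r)) atTop (𝓝 0) := by
    have hr0 : 0 ≤ r := le_trans (norm_nonneg lam) (by rw [hr_def]; linarith)
    have h1 : Tendsto (fun n : ℕ => r ^ (n+1)) atTop (𝓝 0) :=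
      (tendsto_pow_atTop_nhds_zero_of_lt_one hr0 hr1).comp (tendsto_add_atTop_nat 1)
    simpa using h1.div_const (1 - r)
  obtain ⟨n, hnb, hn1⟩ :=
    ((htend.eventually (gt_mem_nhds (by positivity : (0:ℝ) < m/4))).and
      (eventually_ge_atTop 1)).exists
  have htail : ∀ z ∈ Metric.closedBall lam ρ, ‖MFun a z - MPoly a n z‖ ≤ m/4 := fun z hz =>
    le_trans (tail_bound ha' hr1 (hzr z hz) n) hnb.le
  have hzero : ∃ μ ∈ Metric.closedBall lam ρ, MPoly a n μ = 0 := by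
    by_contra hcon
    push_neg at hcon
    set g : ℂ → ℂ := fun z => (MPoly a n z)⁻¹ with hg_def
    have gdiff : DifferentiableOn ℂ g (Metric.closedBall lam ρ) :=
      ((mpoly_differentiable a n).differentiableOn).inv hcon
    have hdc : DiffContOnCl ℂ g (Metric.ball lam ρ) :=
      ⟨gdiff.mono Metric.ball_subset_closedBall,
       gdiff.continuousOn.mono Metric.closure_ball_subset_closedBall⟩
    have hbound : ∀ z ∈ frontier (Metric.ball lam ρ), ‖g z‖ ≤ (m/2)⁻¹ := by
      intro z hz
      rw [frontier_ball lam hρ.ne'] at hz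
      have h1 : m ≤ ‖MFun a z‖ := hz₀min hz
      have h2 : m/2 ≤ ‖MPoly a n z‖ := by
        have h3 := htail z (Metric.sphere_subset_closedBall hz)
        have h4 := norm_sub_norm_le (MFun a z) (MPoly a n z)
        linarith
      rw [hg_def, norm_inv]
      exact inv_anti₀ (by positivity) h2
    have hmax := Complex.norm_le_of_forall_mem_frontier_norm_le Metric.isBounded_ball hdc hbound
      (subset_closure (Metric.mem_ball_self hρ))
    have hPlam : ‖MPoly a n lam‖ ≤ m/4 := by
      have := htail lam (Metric.mem_closedBall_self hρ.le)
      rwa [hF, zero_sub, norm_neg] at this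
    have hPpos : 0 < ‖MPoly a n lam‖ :=
      norm_pos_iff.mpr (hcon lam (Metric.mem_closedBall_self hρ.le))
    have h4 : (m/4 : ℝ)⁻¹ ≤ ‖g lam‖ := by
      rw [hg_def, norm_inv]; exact inv_anti₀ hPpos hPlam
    have h5 : (m/4 : ℝ)⁻¹ ≤ (m/2)⁻¹ := le_trans h4 hmax
    have h6 : m/2 ≤ m/4 := (inv_le_inv₀ (by positivity) (by positivity)).mp h5
    linarith
  obtain ⟨μ, hμball, hμ0⟩ := hzero
  refine ⟨μ, ⟨?_, n, hn1, a, ha, ?_⟩, ?_⟩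
  · have := hsub hμball
    rwa [Metric.mem_ball, Complex.dist_eq, sub_zero] at this
  · simpa [MPoly] using hμ0
  · rw [dist_comm]
    calc dist μ lam ≤ ρ := Metric.mem_closedBall.mp hμball
      _ < ε := by linarith

lemma mcoef_isCompact : IsCompact MCoef := by
  have h : MCoef = Set.pi Set.univ (fun _ : ℕ => ({-1, 0, 1} : Set ℤ)) := by
    ext b
    simp [MCoef, Set.mem_pi]
  rw [h]
  exact isCompact_univ_pi (fun _ => (Set.toFinite _).isCompact)

lemma closure_inter_subset_mset :
    closure MSet0 ∩ Metric.ball (0:ℂ) 1 ⊆ MSet := by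
  rintro lam ⟨hcl, hball⟩
  have hlam : ‖lam‖ < 1 := by
    simpa [Metric.mem_ball, Complex.dist_eq] using hball
  obtain ⟨u, hu_mem, hu_lim⟩ := mem_closure_iff_seq_limit.mp hcl
  set r : ℝ := (1 + ‖lam‖)/2 with hr_def
  have hr1 : r < 1 := by rw [hr_def]; linarith
  have hr0 : 0 ≤ r := by positivity
  have hlamr : ‖lam‖ ≤ r := by rw [hr_def]; linarith [norm_nonneg lam]
  -- continuity of `b ↦ MFun b lam` on `MCoef`
  have hcont : ContinuousOn (fun b : ℕ → ℤ => MFun b lam) MCoef := by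
    apply TendstoUniformlyOn.continuousOn (F := fun n b => MPoly b n lam) (p := Filter.atTop)
    · rw [Metric.tendstoUniformlyOn_iff]
      intro ε hε
      have htend : Tendsto (fun n : ℕ => ‖lam‖^(n+1)/(1-‖lam‖)) atTop (𝓝 0) := by
        have h1 : Tendsto (fun n : ℕ => ‖lam‖ ^ (n+1)) atTop (𝓝 0) :=
          (tendsto_pow_atTop_nhds_zero_of_lt_one (norm_nonneg lam) hlam).comp
            (tendsto_add_atTop_nat 1)
        simpa using h1.div_const (1 - ‖lam‖)
      filter_upwards [htend.eventually (gt_mem_nhds hε)] with n hn b hb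
      rw [dist_eq_norm]
      exact lt_of_le_of_lt (tail_bound hb hlam le_rfl n) hn
    · apply Filter.Frequently.of_forall
      intro n
      apply Continuous.continuousOn
      apply continuous_const.add
      apply continuous_finset_sum
      intro k _
      exact ((continuous_of_discreteTopology
        (f := fun z : ℤ => (z : ℂ))).comp (continuous_apply k)).mul continuous_const
  have himg : IsCompact ((fun b : ℕ → ℤ => MFun b lam) '' MCoef) :=
    mcoef_isCompact.image_of_continuousOn hcont
  -- the error terms tend to zero
  have hE : Tendsto (fun j => ∑' k : ℕ, ‖lam^(k+1) - (u j)^(k+1)‖) atTop (𝓝 0) := by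
    have hb : Summable (fun k : ℕ => 2 * r^(k+1)) :=
      (((summable_geometric_of_lt_one hr0 hr1).comp_injective
        (add_left_injective 1)).mul_left 2)
    have h := tendsto_tsum_of_dominated_convergence
      (f := fun j k => ‖lam^(k+1) - (u j)^(k+1)‖) (g := fun _ => (0:ℝ))
      (bound := fun k => 2 * r^(k+1)) (𝓕 := Filter.atTop) hb ?_ ?_
    · simpa using h
    · intro k
      have h1 : Tendsto (fun j => lam^(k+1) - (u j)^(k+1)) atTop (𝓝 0) := by
        have := tendsto_const_nhds (x := lam^(k+1)) (f := Filter.atTop (α := ℕ))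
        simpa using this.sub (hu_lim.pow (k+1))
      simpa using h1.norm
    · have hev : ∀ᶠ j in atTop, ‖u j‖ < r := by
        apply hu_lim.norm.eventually_lt_const
        linarith
      filter_upwards [hev] with j hj k
      rw [Real.norm_eq_abs, abs_of_nonneg (norm_nonneg _)]
      calc ‖lam^(k+1) - (u j)^(k+1)‖ ≤ ‖lam^(k+1)‖ + ‖(u j)^(k+1)‖ := norm_sub_le _ _
        _ ≤ r^(k+1) + r^(k+1) := by
            rw [norm_pow, norm_pow]
            exact add_le_add (pow_le_pow_left₀ (norm_nonneg _) hlamr _)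
              (pow_le_pow_left₀ (norm_nonneg _) hj.le _)
        _ = 2 * r^(k+1) := by ring
  -- 0 is in the (compact, hence closed) image
  have h0mem : (0:ℂ) ∈ (fun b : ℕ → ℤ => MFun b lam) '' MCoef := by
    rw [← himg.isClosed.closure_eq, Metric.mem_closure_iff]
    intro ε hε
    obtain ⟨j, hj⟩ := (hE.eventually (gt_mem_nhds hε)).exists
    obtain ⟨hujlt, nj, hnj1, b, hb, heq⟩ := hu_mem j
    have hujlt' : ‖u j‖ < 1 := hujlt
    set c : ℕ → ℤ := fun k => if k < nj then b k else 0 with hc_def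
    have hc : c ∈ MCoef := by
      intro k
      by_cases h : k < nj
      · simpa [hc_def, h] using hb k
      · simp [hc_def, h]
    have hcuj : MFun c (u j) = 0 := by
      have hzero : ∀ k ∉ Finset.range nj, (c k : ℂ) * (u j)^(k+1) = 0 := by
        intro k hk
        rw [Finset.mem_range] at hk
        simp [hc_def, hk]
      have hsum := hasSum_sum_of_ne_finset_zero (L := SummationFilter.unconditional ℕ) hzero
      have hsum_eq : ∑ k ∈ Finset.range nj, (c k : ℂ) * (u j)^(k+1)
          = ∑ k ∈ Finset.range nj, (b k : ℂ) * (u j)^(k+1) := by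
        apply Finset.sum_congr rfl
        intro k hk
        rw [Finset.mem_range] at hk
        simp [hc_def, hk]
      simp only [MFun, hsum.tsum_eq, hsum_eq]
      exact heq
    refine ⟨MFun c lam, ⟨c, hc, rfl⟩, ?_⟩
    have hle := mfun_sub_le hc hlam hujlt'
    rw [hcuj, sub_zero] at hle
    rw [dist_comm, dist_eq_norm, sub_zero]
    exact lt_of_le_of_lt hle hj
  obtain ⟨c, hc, hc0⟩ := h0mem
  refine ⟨hlam, c, hc, ?_⟩
  have hsummable := msummable hc hlam
  have htsum : ∑' k : ℕ, (c k : ℂ) * lam^(k+1) = -1 := by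
    have h1 : (1:ℂ) + ∑' k : ℕ, (c k : ℂ) * lam^(k+1) = 0 := hc0
    exact eq_neg_of_add_eq_zero_right h1
  rw [← htsum]
  exact hsummable.hasSum

/-- ℳ equals the closure of ℳ₀ intersected with the open unit disk. -/
theorem MSet_eq_closure_MSet0_inter_ball :
    MSet = closure MSet0 ∩ Metric.ball (0 : ℂ) 1 := by
  apply Set.Subset.antisymm
  · intro lam hl
    refine ⟨mset_subset_closure hl, ?_⟩
    simpa [Metric.mem_ball, Complex.dist_eq] using hl.1
  · exact closure_inter_subset_mset
end
end

section
/- Let θ be a complex Garsia number whose minimal polynomial over ℚ has constant term ±2, and let λ = 1/θ. Then for every n ≥ 1 the 2^n sums ∑_{k=0}^{n-1} a_k λ^k with a_k ∈ {-1,1} are pairwise distinct, and moreover there exists a constant c > 0, independent of n, such that any two distinct such sums x ≠ y satisfy |x − y| ≥ c·2^{-n/2}. -/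
open MeasureTheory Set Pointwise ENNReal

noncomputable section

open Polynomial IntermediateField Finset in
set_option maxHeartbeats 2000000 in
private lemma garsia_sep (θ : ℂ) (hnonreal : θ.im ≠ 0)
    (hint : IsIntegral ℤ θ) (hgt : 1 < ‖θ‖)
    (hconj : ∀ z : ℂ, Polynomial.aeval z (minpoly ℚ θ) = 0 → 1 < ‖z‖)
    (hconst : (minpoly ℚ θ).coeff 0 = 2 ∨ (minpoly ℚ θ).coeff 0 = -2) :
    ∃ c : ℝ, 0 < c ∧ ∀ n : ℕ, 1 ≤ n → ∀ δ : ℕ → ℤ,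
      (∀ k, δ k = -1 ∨ δ k = 0 ∨ δ k = 1) → (∃ k < n, δ k ≠ 0) →
      c * (2:ℝ) ^ (-(n:ℝ)/2) ≤
        ‖∑ k ∈ Finset.range n, (δ k : ℂ) * θ⁻¹ ^ k‖ := by
  classical
  have hθ0 : θ ≠ 0 := by
    intro h; rw [h] at hnonreal; simp at hnonreal
  have hB0 : (0:ℝ) < ‖θ‖ := lt_trans one_pos hgt
  -- nonvanishing
  have hnv : ∀ S : Polynomial ℤ, S ≠ 0 →
      (∀ i, S.coeff i = -1 ∨ S.coeff i = 0 ∨ S.coeff i = 1) →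
      Polynomial.aeval θ S ≠ 0 := by
    intro S hS0 hSc hval
    set f := minpoly ℤ θ with hf
    have hmap : minpoly ℚ θ = f.map (algebraMap ℤ ℚ) :=
      minpoly.isIntegrallyClosed_eq_field_fractions ℚ ℂ hint
    have hf0 : f.coeff 0 = 2 ∨ f.coeff 0 = -2 := by
      rw [hmap, Polynomial.coeff_map] at hconst
      rw [algebraMap_int_eq] at hconst
      simp only [Int.coe_castRingHom] at hconst
      rcases hconst with h | h
      · left; exact_mod_cast h
      · right; exact_mod_cast h
    obtain ⟨T, hT⟩ : f ∣ S := minpoly.isIntegrallyClosed_dvd hint hval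
    have hT0 : T ≠ 0 := by
      rintro rfl; rw [mul_zero] at hT; exact hS0 hT
    have htc : S.trailingCoeff = f.trailingCoeff * T.trailingCoeff := by
      rw [hT, Polynomial.trailingCoeff_mul]
    have hftd : f.natTrailingDegree = 0 := by
      rw [Polynomial.natTrailingDegree_eq_zero]
      right; rcases hf0 with h | h <;> rw [h] <;> norm_num
    have hftc : f.trailingCoeff = f.coeff 0 := by
      rw [Polynomial.trailingCoeff, hftd]
    have hTtc : T.trailingCoeff ≠ 0 := Polynomial.trailingCoeff_nonzero_iff_nonzero.mpr hT0
    have h2 : (2:ℤ) ≤ |S.trailingCoeff| := by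
      rw [htc, hftc, abs_mul]
      have h1 : (1:ℤ) ≤ |T.trailingCoeff| := Int.one_le_abs hTtc
      rcases hf0 with h | h <;> rw [h] <;> simp <;> omega
    have h1 : |S.trailingCoeff| ≤ 1 := by
      rcases hSc S.natTrailingDegree with h | h | h <;>
        rw [Polynomial.trailingCoeff, h] <;> norm_num
    omega
  -- number field setup
  have hQint : IsIntegral ℚ θ := hint.tower_top
  haveI : FiniteDimensional ℚ ℚ⟮θ⟯ := IntermediateField.adjoin.finiteDimensional hQint
  set K := ℚ⟮θ⟯ with hK
  set θ' : K := IntermediateField.AdjoinSimple.gen ℚ θ with hθ'def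
  have hθ'map : algebraMap K ℂ θ' = θ := IntermediateField.AdjoinSimple.algebraMap_gen ℚ θ
  have hθ'min : minpoly ℚ θ' = minpoly ℚ θ := IntermediateField.minpoly_gen ℚ θ
  have hθ'int : IsIntegral ℤ θ' := by
    rw [← isIntegral_algebraMap_iff (algebraMap K ℂ).injective, hθ'map]; exact hint
  have hroot : ∀ σ : K →ₐ[ℚ] ℂ, 1 < ‖σ θ'‖ := by
    intro σ
    apply hconj
    rw [← hθ'min]
    rw [show (aeval (σ θ')) (minpoly ℚ θ') = σ (aeval θ' (minpoly ℚ θ')) from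
      Polynomial.aeval_algHom_apply σ θ' _, minpoly.aeval, map_zero]
  -- product of |σ θ'| = 2
  have hLprod : ∏ σ : K →ₐ[ℚ] ℂ, ‖σ θ'‖ = 2 := by
    have hnorm : algebraMap ℚ ℂ (Algebra.norm ℚ θ') = ∏ σ : K →ₐ[ℚ] ℂ, σ θ' :=
      Algebra.norm_eq_prod_embeddings ℚ ℂ θ'
    have hgen : Algebra.norm ℚ θ' =
        (-1) ^ (IntermediateField.adjoin.powerBasis hQint).dim * (minpoly ℚ θ').coeff 0 := by
      have := Algebra.PowerBasis.norm_gen_eq_coeff_zero_minpoly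
        (IntermediateField.adjoin.powerBasis hQint)
      rwa [IntermediateField.adjoin.powerBasis_gen] at this
    have habs : ∏ σ : K →ₐ[ℚ] ℂ, ‖σ θ'‖
        = ‖algebraMap ℚ ℂ (Algebra.norm ℚ θ')‖ := by
      rw [hnorm, norm_prod]
    rw [habs, hgen, hθ'min]
    rw [show algebraMap ℚ ℂ ((-1) ^ (IntermediateField.adjoin.powerBasis hQint).dim
        * (minpoly ℚ θ).coeff 0) =
        (((-1) ^ (IntermediateField.adjoin.powerBasis hQint).dim
        * (minpoly ℚ θ).coeff 0 : ℚ) : ℂ) from eq_ratCast _ _]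
    rcases hconst with h | h <;> rw [h] <;> push_cast <;>
      simp [abs_mul, mul_pow, norm_mul, norm_pow]
  -- the two distinguished embeddings
  set ι : K →ₐ[ℚ] ℂ := K.val with hιdef
  set κ : K →ₐ[ℚ] ℂ := ((starRingEnd ℂ).comp (algebraMap K ℂ)).toRatAlgHom with hκdef
  have hι : ∀ x : K, ι x = algebraMap K ℂ x := fun _ => rfl
  have hκ : ∀ x : K, κ x = starRingEnd ℂ (algebraMap K ℂ x) := by
    intro x
    simp only [hκdef, RingHom.toRatAlgHom, AlgHom.coe_mk, RingHom.coe_comp, Function.comp_apply]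
  have hκι : κ ≠ ι := by
    intro h
    have : starRingEnd ℂ θ = θ := by
      rw [← hθ'map, ← hκ, h, hι]
    rw [Complex.conj_eq_iff_im] at this
    exact hnonreal this
  set T : Finset (K →ₐ[ℚ] ℂ) := (Finset.univ.erase ι).erase κ with hTdef
  have hκmem : κ ∈ Finset.univ.erase ι := Finset.mem_erase.mpr ⟨hκι, Finset.mem_univ κ⟩
  have hsplit : ∀ g : (K →ₐ[ℚ] ℂ) → ℝ,
      ∏ σ : K →ₐ[ℚ] ℂ, g σ = g ι * (g κ * ∏ σ ∈ T, g σ) := by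
    intro g
    rw [hTdef, Finset.mul_prod_erase _ _ hκmem, Finset.mul_prod_erase _ _ (Finset.mem_univ ι)]
  -- product over T of moduli
  have hTpos : ∀ σ ∈ T, (0:ℝ) < ‖σ θ'‖ - 1 := by
    intro σ _; linarith [hroot σ]
  set P : ℝ := ∏ σ ∈ T, (‖σ θ'‖ - 1)⁻¹ with hPdef
  have hPpos : 0 < P := Finset.prod_pos (fun σ hσ => inv_pos.mpr (hTpos σ hσ))
  have hiabs : ‖ι θ'‖ = ‖θ‖ := by rw [hι, hθ'map]
  have hkabs : ‖κ θ'‖ = ‖θ‖ := by rw [hκ, hθ'map, Complex.norm_conj]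
  have hTprodpos : (0:ℝ) < ∏ σ ∈ T, ‖σ θ'‖ :=
    Finset.prod_pos (fun σ hσ => lt_trans one_pos (hroot σ))
  have hTprod : ∏ σ ∈ T, ‖σ θ'‖ = 2 / (‖θ‖)^2 := by
    have h := hsplit (fun σ => ‖σ θ'‖)
    simp only [hiabs, hkabs] at h
    rw [hLprod] at h
    field_simp
    nlinarith [h]
  -- the constant
  refine ⟨Real.sqrt P⁻¹, Real.sqrt_pos.mpr (inv_pos.mpr hPpos), ?_⟩
  intro n hn δ hδ hδne
  -- the polynomial
  set S : Polynomial ℤ := ∑ j ∈ Finset.range n, Polynomial.C (δ (n-1-j)) * Polynomial.X^j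
    with hSdef
  have hScoeff : ∀ i, S.coeff i = if i < n then δ (n-1-i) else 0 := by
    intro i
    rw [hSdef, Polynomial.finset_sum_coeff]
    simp only [Polynomial.coeff_C_mul, Polynomial.coeff_X_pow, mul_ite, mul_one, mul_zero]
    rw [Finset.sum_ite_eq (Finset.range n) i (fun j => δ (n-1-j))]
    simp [Finset.mem_range]
  have hSc : ∀ i, S.coeff i = -1 ∨ S.coeff i = 0 ∨ S.coeff i = 1 := by
    intro i; rw [hScoeff i]
    split
    · exact hδ _
    · right; left; rfl
  have hS0 : S ≠ 0 := by
    obtain ⟨k, hk, hδk⟩ := hδne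
    intro h
    have hcf := hScoeff (n-1-k)
    rw [h] at hcf
    simp only [Polynomial.coeff_zero] at hcf
    rw [if_pos (by omega), show n-1-(n-1-k) = k by omega] at hcf
    exact hδk hcf.symm
  -- evaluations
  have hSeval : ∀ (R : Type) [inst : CommRing R] (z : R),
      Polynomial.aeval z S = ∑ j ∈ Finset.range n, (δ (n-1-j) : R) * z^j := by
    intro R _ z
    rw [hSdef, map_sum]
    refine Finset.sum_congr rfl (fun j _ => ?_)
    simp
  set D : ℂ := ∑ k ∈ Finset.range n, (δ k : ℂ) * θ⁻¹ ^ k with hD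
  have hkey : Polynomial.aeval θ S = θ^(n-1) * D := by
    rw [hSeval ℂ θ, hD, Finset.mul_sum]
    rw [← Finset.sum_range_reflect (fun j => (δ (n-1-j) : ℂ) * θ^j) n]
    refine Finset.sum_congr rfl (fun j hj => ?_)
    rw [Finset.mem_range] at hj
    rw [show n-1-(n-1-j) = j by omega, inv_pow]
    have hpow : θ^(n-1-j) = θ^(n-1) * (θ^j)⁻¹ := by
      rw [eq_mul_inv_iff_mul_eq₀ (pow_ne_zero j hθ0), ← pow_add]
      congr 1; omega
    rw [hpow]; ring
  -- the algebraic integer α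
  set α : K := Polynomial.aeval θ' S with hα
  have hαmap : algebraMap K ℂ α = Polynomial.aeval θ S := by
    rw [hα, Polynomial.aeval_def, Polynomial.aeval_def, Polynomial.hom_eval₂, hθ'map]
    congr 1
  have hα0 : α ≠ 0 := by
    intro h
    exact hnv S hS0 hSc (by rw [← hαmap, h, map_zero])
  have hαint : IsIntegral ℤ α := by
    rw [hα, hSeval K θ']
    refine IsIntegral.sum _ (fun j _ => IsIntegral.mul ?_ (hθ'int.pow j))
    have : ((δ (n-1-j) : ℤ) : K) = algebraMap ℤ K (δ (n-1-j)) := by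
      rw [algebraMap_int_eq]; simp
    rw [this]
    exact isIntegral_algebraMap
  -- norm at least 1
  have hnorm1 : (1:ℝ) ≤ ∏ σ : K →ₐ[ℚ] ℂ, ‖σ α‖ := by
    have h1 : algebraMap ℚ ℂ (Algebra.norm ℚ α) = ∏ σ : K →ₐ[ℚ] ℂ, σ α :=
      Algebra.norm_eq_prod_embeddings ℚ ℂ α
    have h2 : Algebra.norm ℚ α ≠ 0 := by
      rw [Algebra.norm_ne_zero_iff]
      exact hα0
    obtain ⟨m, hm⟩ := IsIntegrallyClosed.isIntegral_iff.mp (Algebra.isIntegral_norm ℚ hαint)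
    have hm0 : m ≠ 0 := by rintro rfl; rw [map_zero] at hm; exact h2 hm.symm
    have hge : (1:ℚ) ≤ |Algebra.norm ℚ α| := by
      rw [← hm, algebraMap_int_eq]
      simp only [Int.coe_castRingHom]
      rw [← Int.cast_abs]
      exact_mod_cast Int.one_le_abs hm0
    calc (1:ℝ) ≤ |((Algebra.norm ℚ α : ℚ) : ℝ)| := by
          rw [← Rat.cast_abs]; exact_mod_cast hge
      _ = ‖algebraMap ℚ ℂ (Algebra.norm ℚ α)‖ := by
          rw [eq_ratCast (algebraMap ℚ ℂ), ← Complex.ofReal_ratCast, Complex.norm_real, Real.norm_eq_abs]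
      _ = ∏ σ : K →ₐ[ℚ] ℂ, ‖σ α‖ := by rw [h1, norm_prod]
  -- embedding values
  have hσα : ∀ σ : K →ₐ[ℚ] ℂ, σ α = ∑ j ∈ Finset.range n, (δ (n-1-j):ℂ) * (σ θ')^j := by
    intro σ
    rw [hα, hSeval K θ', map_sum]
    refine Finset.sum_congr rfl (fun j _ => ?_)
    rw [map_mul, map_pow, map_intCast]
  set A : ℝ := ‖Polynomial.aeval θ S‖ with hAdef
  have hA0 : 0 ≤ A := norm_nonneg _
  have hiA : ‖ι α‖ = A := by rw [hι, hαmap]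
  have hkA : ‖κ α‖ = A := by rw [hκ, hαmap, Complex.norm_conj]
  have hbound : ∀ σ ∈ T, ‖σ α‖ ≤
      (‖σ θ'‖)^n * (‖σ θ'‖ - 1)⁻¹ := by
    intro σ hσ
    have hx1 : 1 < ‖σ θ'‖ := hroot σ
    have hx0 : (0:ℝ) < ‖σ θ'‖ - 1 := by linarith
    rw [hσα]
    calc ‖∑ j ∈ Finset.range n, (δ (n-1-j):ℂ) * (σ θ')^j‖
        ≤ ∑ j ∈ Finset.range n, ‖(δ (n-1-j):ℂ) * (σ θ')^j‖ :=
          norm_sum_le _ _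
      _ ≤ ∑ j ∈ Finset.range n, (‖σ θ'‖)^j := by
          refine Finset.sum_le_sum (fun j _ => ?_)
          rw [norm_mul, norm_pow]
          have hd1 : ‖(δ (n-1-j):ℂ)‖ ≤ 1 := by
            rcases hδ (n-1-j) with h|h|h <;> rw [h] <;> norm_num
          nlinarith [pow_nonneg (norm_nonneg (σ θ')) j,
            norm_nonneg ((δ (n-1-j):ℂ))]
      _ = ((‖σ θ'‖)^n - 1)/(‖σ θ'‖ - 1) :=
          geom_sum_eq (ne_of_gt hx1) n
      _ ≤ (‖σ θ'‖)^n * (‖σ θ'‖ - 1)⁻¹ := by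
          rw [div_eq_mul_inv]
          have hinv : (0:ℝ) < (‖σ θ'‖ - 1)⁻¹ := inv_pos.mpr hx0
          nlinarith
  -- main chain
  set B : ℝ := ‖θ‖ with hBdef
  have hchain : (1:ℝ) ≤ A * (A * ((2/B^2)^n * P)) := by
    refine le_trans hnorm1 ?_
    rw [hsplit (fun σ => ‖σ α‖), hiA, hkA]
    have hTle : ∏ σ ∈ T, ‖σ α‖ ≤ (2/B^2)^n * P := by
      calc ∏ σ ∈ T, ‖σ α‖
          ≤ ∏ σ ∈ T, ((‖σ θ'‖)^n * (‖σ θ'‖ - 1)⁻¹) :=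
            Finset.prod_le_prod (fun σ _ => norm_nonneg _) hbound
        _ = (∏ σ ∈ T, (‖σ θ'‖)^n) * P := Finset.prod_mul_distrib
        _ = (2/B^2)^n * P := by rw [Finset.prod_pow, hTprod]
    exact mul_le_mul_of_nonneg_left (mul_le_mul_of_nonneg_left hTle hA0) hA0
  have hABD : A = B^(n-1) * ‖D‖ := by rw [hAdef, hkey, norm_mul, norm_pow]
  have hBne : B ≠ 0 := ne_of_gt hB0
  have hDsq : 1 ≤ (‖D‖)^2 * (2^n * P) := by
    have hB2 : (1:ℝ) ≤ B^2 := by nlinarith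
    have h2 : B^2 * 1 ≤ B^2 * (A * (A * ((2/B^2)^n * P))) :=
      mul_le_mul_of_nonneg_left hchain (by positivity)
    have hpowid : (B^(n-1))^2 * B^2 = (B^2)^n := by
      rw [← pow_mul, ← pow_add, ← pow_mul]
      congr 1; omega
    have heq : B^2 * (A * (A * ((2/B^2)^n * P))) = (‖D‖)^2 * (2^n * P) := by
      rw [hABD, div_pow, ← hpowid]
      field_simp
    rw [heq] at h2
    nlinarith [h2, hB2, mul_pos (pow_pos (by norm_num : (0:ℝ) < 2) n) hPpos,
      sq_nonneg (‖D‖)]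
  -- unsquare
  have hD0 : 0 ≤ ‖D‖ := norm_nonneg _
  have h2nP : (0:ℝ) < 2^n * P := by positivity
  have hsq : ((2:ℝ)^n * P)⁻¹ ≤ (‖D‖)^2 := by
    rw [inv_eq_one_div, div_le_iff₀ h2nP]
    linarith [hDsq]
  have hle : Real.sqrt (((2:ℝ)^n * P)⁻¹) ≤ ‖D‖ := by
    rw [show ‖D‖ = Real.sqrt ((‖D‖)^2) from (Real.sqrt_sq hD0).symm]
    exact Real.sqrt_le_sqrt hsq
  refine le_trans (le_of_eq ?_) hle
  have h2sqrt : Real.sqrt (((2:ℝ)^n)⁻¹) = (2:ℝ) ^ (-(n:ℝ)/2) := by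
    rw [show ((2:ℝ)^n)⁻¹ = (2:ℝ) ^ (-(n:ℝ)) by
      rw [← Real.rpow_natCast 2 n, ← Real.rpow_neg (by norm_num : (0:ℝ) ≤ 2)]]
    rw [Real.sqrt_eq_rpow, ← Real.rpow_mul (by norm_num : (0:ℝ) ≤ 2)]
    congr 1
    ring
  rw [mul_inv, Real.sqrt_mul (by positivity : (0:ℝ) ≤ ((2:ℝ)^n)⁻¹), h2sqrt, mul_comm]

/-- For a complex Garsia number θ with minimal polynomial of constant term
±2 and λ = 1/θ: the 2ⁿ signed sums ∑_{k<n} a_k λ^k, a_k ∈ {-1,1}, are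
pairwise distinct, and are c·2^{-n/2}-separated for some c > 0. -/
theorem garsia_sums_distinct_and_separated (θ : ℂ) (hnonreal : θ.im ≠ 0)
    (hint : IsIntegral ℤ θ) (hgt : 1 < ‖θ‖)
    (hconj : ∀ z : ℂ, Polynomial.aeval z (minpoly ℚ θ) = 0 → 1 < ‖z‖)
    (hconst : (minpoly ℚ θ).coeff 0 = 2 ∨ (minpoly ℚ θ).coeff 0 = -2) :
    (∀ n : ℕ, 1 ≤ n → ∀ a b : ℕ → ℤ,
      (∀ k, a k = -1 ∨ a k = 1) → (∀ k, b k = -1 ∨ b k = 1) →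
      ∑ k ∈ Finset.range n, (a k : ℂ) * θ⁻¹ ^ k =
        ∑ k ∈ Finset.range n, (b k : ℂ) * θ⁻¹ ^ k →
      ∀ k < n, a k = b k) ∧
    ∃ c : ℝ, 0 < c ∧ ∀ n : ℕ, 1 ≤ n → ∀ a b : ℕ → ℤ,
      (∀ k, a k = -1 ∨ a k = 1) → (∀ k, b k = -1 ∨ b k = 1) →
      (∃ k < n, a k ≠ b k) →
      c * (2 : ℝ) ^ (-(n : ℝ) / 2) ≤
        ‖∑ k ∈ Finset.range n, (a k : ℂ) * θ⁻¹ ^ k -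
          ∑ k ∈ Finset.range n, (b k : ℂ) * θ⁻¹ ^ k‖ := by
  obtain ⟨c, hc, hsep⟩ := garsia_sep θ hnonreal hint hgt hconj hconst
  have main : ∀ n : ℕ, 1 ≤ n → ∀ a b : ℕ → ℤ, (∀ k, a k = -1 ∨ a k = 1) →
      (∀ k, b k = -1 ∨ b k = 1) → (∃ k < n, a k ≠ b k) →
      c * (2:ℝ) ^ (-(n:ℝ)/2) ≤ ‖∑ k ∈ Finset.range n, (a k : ℂ) * θ⁻¹ ^ k -
        ∑ k ∈ Finset.range n, (b k : ℂ) * θ⁻¹ ^ k‖ := by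
    intro n hn a b ha hb hne
    set δ : ℕ → ℤ := fun k => (a k - b k) / 2 with hδdef
    have hδval : ∀ k, a k - b k = 2 * δ k := by
      intro k; rcases ha k with h|h <;> rcases hb k with h'|h' <;> simp [hδdef, h, h']
    have hδr : ∀ k, δ k = -1 ∨ δ k = 0 ∨ δ k = 1 := by
      intro k; rcases ha k with h|h <;> rcases hb k with h'|h' <;> simp [hδdef, h, h']
    have hδne : ∃ k < n, δ k ≠ 0 := by
      obtain ⟨k, hk, hab⟩ := hne
      refine ⟨k, hk, fun h => hab ?_⟩
      have := hδval k
      omega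
    have hdiff : ∑ k ∈ Finset.range n, (a k : ℂ) * θ⁻¹ ^ k -
        ∑ k ∈ Finset.range n, (b k : ℂ) * θ⁻¹ ^ k
        = 2 * ∑ k ∈ Finset.range n, (δ k : ℂ) * θ⁻¹ ^ k := by
      rw [Finset.mul_sum, ← Finset.sum_sub_distrib]
      refine Finset.sum_congr rfl (fun k _ => ?_)
      have h1 : ((a k - b k : ℤ) : ℂ) = ((2 * δ k : ℤ) : ℂ) := by rw [hδval k]
      push_cast at h1
      rw [← sub_mul, h1, mul_assoc]
    rw [hdiff, norm_mul]
    have hs := hsep n hn δ hδr hδne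
    have h2 : ‖(2:ℂ)‖ = 2 := by norm_num
    rw [h2]
    have habs := norm_nonneg (∑ k ∈ Finset.range n, (δ k : ℂ) * θ⁻¹ ^ k)
    linarith
  constructor
  · intro n hn a b ha hb hsum k hk
    by_contra hne
    have h := main n hn a b ha hb ⟨k, hk, hne⟩
    rw [hsum, sub_self, norm_zero] at h
    have hpos : (0:ℝ) < c * (2:ℝ) ^ (-(n:ℝ)/2) := by positivity
    linarith
  · exact ⟨c, hc, main⟩
end
end
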